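/- arXiv:math/0104232 — 6 statements merged into one kernel-verified Lean document; each statement's English description precedes it below -/
import Mathlib

section
/- For every integer k ≥ 0, the k-th derivative operator A_k f = f^{(k)} is sl(2,ℝ)-invariant from F_{(1−k)/2} to F_{(1+k)/2}; that is, for each of the three vector fields X ∈ {d/dx, x·d/dx, x²·d/dx} and every smooth function f : ℝ → ℝ, one has L_X^{(1+k)/2}(f^{(k)}) = (L_X^{(1−k)/2} f)^{(k)}. -/
noncomputable def lieD1 (a : ℝ → ℝ) (l : ℝ) (f : ℝ → ℝ) : ℝ → ℝ :=
  fun x => a x * deriv f x + l * deriv a x * f x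

section aux

variable {f : ℝ → ℝ}

private lemma dif (hf : ContDiff ℝ (⊤ : ℕ∞) f) (n : ℕ) : Differentiable ℝ (iteratedDeriv n f) :=
  hf.differentiable_iteratedDeriv n (by exact_mod_cast ENat.coe_lt_top n)

private lemma dID (n : ℕ) : deriv (iteratedDeriv n f) = iteratedDeriv (n + 1) f :=
  (iteratedDeriv_succ).symm

private lemma L2 (hf : ContDiff ℝ (⊤ : ℕ∞) f) (l : ℝ) (k : ℕ) :
    iteratedDeriv k (fun x => x * deriv f x + l * f x)
      = fun x => x * iteratedDeriv (k + 1) f x + (l + k) * iteratedDeriv k f x := by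
  induction k with
  | zero => simp [iteratedDeriv_one, iteratedDeriv_zero]
  | succ k ih =>
    rw [iteratedDeriv_succ, ih]
    funext x
    have h1 : DifferentiableAt ℝ (iteratedDeriv (k + 1) f) x := (dif hf (k + 1)) x
    have h2 : DifferentiableAt ℝ (iteratedDeriv k f) x := (dif hf k) x
    rw [deriv_fun_add ((differentiableAt_fun_id.fun_mul h1)) (h2.const_mul _),
      deriv_fun_mul differentiableAt_fun_id h1, deriv_const_mul _ h2,
      dID (f := f), dID (f := f)]
    simp only [deriv_id'']
    push_cast
    ring

private lemma L3 (hf : ContDiff ℝ (⊤ : ℕ∞) f) (l : ℝ) (k : ℕ) :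
    iteratedDeriv k (fun x => x ^ 2 * deriv f x + l * (2 * x) * f x)
      = fun x => x ^ 2 * iteratedDeriv (k + 1) f x
          + (2 * l + 2 * k) * x * iteratedDeriv k f x
          + (2 * k * l + k * ((k : ℝ) - 1)) * iteratedDeriv (k - 1) f x := by
  induction k with
  | zero =>
    funext x
    simp only [iteratedDeriv_zero, zero_add, iteratedDeriv_one, Nat.cast_zero]
    ring
  | succ k ih =>
    rw [iteratedDeriv_succ, ih]
    funext x
    have h1 : DifferentiableAt ℝ (iteratedDeriv (k + 1) f) x := (dif hf (k + 1)) x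
    have h2 : DifferentiableAt ℝ (iteratedDeriv k f) x := (dif hf k) x
    have h3 : DifferentiableAt ℝ (iteratedDeriv (k - 1) f) x := (dif hf (k - 1)) x
    have hx2 : DifferentiableAt ℝ (fun x : ℝ => x ^ 2) x := by fun_prop
    have hdx2 : deriv (fun x : ℝ => x ^ 2) x = 2 * x := by
      rw [deriv_pow_field]; norm_num
    have hlin : DifferentiableAt ℝ (fun x : ℝ => (2 * l + 2 * k) * x) x := by fun_prop
    rw [deriv_fun_add (((hx2.fun_mul h1).fun_add ((hlin.fun_mul h2)))) (h3.const_mul _),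
      deriv_fun_add (hx2.fun_mul h1) (hlin.fun_mul h2),
      deriv_fun_mul hx2 h1, deriv_fun_mul hlin h2, deriv_const_mul _ h3, hdx2,
      dID (f := f), dID (f := f), dID (f := f)]
    have hder : deriv (fun x : ℝ => (2 * l + 2 * k) * x) x = 2 * l + 2 * k := by
      rw [deriv_const_mul _ differentiableAt_fun_id, deriv_id'']; ring
    rw [hder]
    rcases k with _ | k
    · push_cast; simp; ring
    · have : (k + 1 : ℕ) - 1 = k := rfl
      rw [this]
      push_cast
      ring

end aux

/-- For every integer `k ≥ 0`, the `k`-th derivative operator `f ↦ f⁽ᵏ⁾` is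
`sl(2,ℝ)`-invariant from densities of degree `(1-k)/2` to densities of degree `(1+k)/2`:
it intertwines the Lie derivative along each of the fields `d/dx`, `x·d/dx`, `x²·d/dx`. -/
theorem kth_derivative_sl2_invariant (k : ℕ) (a : ℝ → ℝ)
    (ha : a ∈ ({fun _ => 1, fun x => x, fun x => x ^ 2} : Set (ℝ → ℝ)))
    (f : ℝ → ℝ) (hf : ContDiff ℝ (⊤ : ℕ∞) f) :
    lieD1 a ((1 + (k : ℝ)) / 2) (iteratedDeriv k f)
      = iteratedDeriv k (lieD1 a ((1 - (k : ℝ)) / 2) f) := by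
  rcases ha with rfl | rfl | rfl
  · -- a = 1
    have : lieD1 (fun _ => 1) ((1 - (k : ℝ)) / 2) f = deriv f := by
      funext x; simp [lieD1]
    rw [this]
    funext x
    simp only [lieD1, deriv_const]
    rw [dID, ← iteratedDeriv_succ']
    ring
  · -- a = x
    have e : lieD1 (fun x => x) ((1 - (k : ℝ)) / 2) f
        = fun x => x * deriv f x + ((1 - (k : ℝ)) / 2) * f x := by
      funext x; simp [lieD1]
    rw [e, L2 hf]
    funext x
    simp only [lieD1, deriv_id'']
    rw [dID]
    ring
  · -- a = x^2
    have e : lieD1 (fun x => x ^ 2) ((1 - (k : ℝ)) / 2) f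
        = fun x => x ^ 2 * deriv f x + ((1 - (k : ℝ)) / 2) * (2 * x) * f x := by
      funext x; simp [lieD1, deriv_pow]
    rw [e, L3 hf]
    funext x
    simp only [lieD1, deriv_pow_field]
    rw [dID]
    push_cast
    ring
end

section
/- Let k ≥ 1 be an integer and λ, μ ∈ ℝ. If the k-th derivative operator f ↦ f^{(k)} satisfies L_X^{μ}(f^{(k)}) = (L_X^{λ} f)^{(k)} for every smooth f : ℝ → ℝ and for both vector fields X = x·d/dx and X = x²·d/dx, then λ = (1−k)/2 and μ = (1+k)/2. -/
lemma iteratedDeriv_cmul_pow (n : ℕ) (c : ℝ) :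
    iteratedDeriv n (fun x : ℝ => c * x ^ n) = fun _ => c * n.factorial := by
  induction n generalizing c with
  | zero => simp [iteratedDeriv_zero]
  | succ n ih =>
    rw [iteratedDeriv_succ']
    have hd : deriv (fun x : ℝ => c * x ^ (n + 1)) = fun x => (c * (n + 1)) * x ^ n := by
      funext x
      rw [deriv_const_mul _ (differentiable_pow (n + 1) x), deriv_pow_field]
      push_cast; ring
    rw [hd, ih]
    funext x
    push_cast [Nat.factorial_succ]
    ring

/-- If the `k`-th derivative operator (`k ≥ 1`) intertwines the Lie derivative actions on
`λ`- and `μ`-densities for both vector fields `x·d/dx` and `x²·d/dx` (for all smooth `f`),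
then necessarily `λ = (1-k)/2` and `μ = (1+k)/2`. -/
theorem kth_derivative_invariant_only_for_resonant_weights (k : ℕ) (hk : 1 ≤ k) (l m : ℝ)
    (h : ∀ a ∈ ({fun x => x, fun x => x ^ 2} : Set (ℝ → ℝ)),
      ∀ f : ℝ → ℝ, ContDiff ℝ (⊤ : ℕ∞) f →
        lieD1 a m (iteratedDeriv k f) = iteratedDeriv k (lieD1 a l f)) :
    l = (1 - (k : ℝ)) / 2 ∧ m = (1 + (k : ℝ)) / 2 := by
  obtain ⟨n, rfl⟩ : ∃ n, k = n + 1 := ⟨k - 1, by omega⟩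
  have hfac : ((n + 1).factorial : ℝ) ≠ 0 := by positivity
  -- equation from a = x, f = x^(n+1)
  have h1 := h (fun x => x) (Or.inl rfl) (fun x : ℝ => x ^ (n + 1))
    (contDiff_id.pow (n + 1))
  -- equation from a = x^2, f = x^n
  have h2 := h (fun x => x ^ 2) (Or.inr rfl) (fun x : ℝ => x ^ n)
    (contDiff_id.pow n)
  -- compute h2 first to get l
  have hdk : iteratedDeriv (n + 1) (fun x : ℝ => x ^ n) = fun _ => 0 := by
    rw [iteratedDeriv_succ]
    have : iteratedDeriv n (fun x : ℝ => x ^ n) = fun _ => (n.factorial : ℝ) := by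
      have := iteratedDeriv_cmul_pow n 1
      simpa using this
    rw [this]
    funext x; simp
  have hlie2 : lieD1 (fun x => x ^ 2) l (fun x : ℝ => x ^ n)
      = fun x : ℝ => ((n : ℝ) + 2 * l) * x ^ (n + 1) := by
    funext x
    simp only [lieD1, deriv_pow_field]
    rcases n with _ | p
    · simp; ring
    · push_cast
      ring
  rw [hdk, hlie2, iteratedDeriv_cmul_pow] at h2
  have h2' := congrFun h2 0
  simp only [lieD1] at h2'
  have h2'' : (0 : ℝ) = ((n : ℝ) + 2 * l) * (n + 1).factorial := by
    simpa using h2'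
  have hl : l = (1 - ((n : ℝ) + 1)) / 2 := by
    have : ((n : ℝ) + 2 * l) = 0 := by
      rcases mul_eq_zero.mp h2''.symm with h' | h'
      · exact h'
      · exact absurd h' hfac
    linarith
  -- compute h1 to get m
  have hdk1 : iteratedDeriv (n + 1) (fun x : ℝ => x ^ (n + 1))
      = fun _ => ((n + 1).factorial : ℝ) := by
    have := iteratedDeriv_cmul_pow (n + 1) 1
    simpa using this
  have hlie1 : lieD1 (fun x => x) l (fun x : ℝ => x ^ (n + 1))
      = fun x : ℝ => (((n : ℝ) + 1) + l) * x ^ (n + 1) := by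
    funext x
    simp only [lieD1, deriv_pow_field, deriv_id'']
    rcases n with _ | p
    · simp; ring
    · push_cast
      ring
  rw [hdk1, hlie1, iteratedDeriv_cmul_pow] at h1
  have h1' := congrFun h1 0
  simp only [lieD1, deriv_const, deriv_id''] at h1'
  have h1'' : m * (n + 1).factorial = (((n : ℝ) + 1) + l) * (n + 1).factorial := by
    simpa using h1'
  have hm : m = ((n : ℝ) + 1) + l := mul_right_cancel₀ hfac h1''
  constructor
  · push_cast; linarith
  · push_cast; linarith
end

section
/- Let k ≥ 1 be an integer and λ, μ ∈ ℝ. If Δ^k satisfies L_X^{μ}(Δ^k f) = Δ^k(L_X^{λ} f) for every smooth f : ℝⁿ → ℝ, both for X = X_0 (the Euler vector field) and for all the inversion generators X = X̄_i (1 ≤ i ≤ n), then λ = (n−2k)/(2n) and μ = (n+2k)/(2n). -/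
noncomputable section

/-- `ε_i = 1` for `i < p`, `ε_i = -1` for `i ≥ p`: the entries of the flat metric of
signature `(p,q)` on `ℝⁿ`. -/
def eps (p : ℕ) {n : ℕ} (i : Fin n) : ℝ := if (i : ℕ) < p then 1 else -1

/-- The partial derivative `∂_i f`. -/
def pd {n : ℕ} (i : Fin n) (f : (Fin n → ℝ) → ℝ) : (Fin n → ℝ) → ℝ :=
  fun x => fderiv ℝ f x (Pi.single i 1)

/-- The iterated partial derivative `∂^α f` for a multi-index `α`. -/
def pdIter {n : ℕ} (α : Fin n → ℕ) (f : (Fin n → ℝ) → ℝ) : (Fin n → ℝ) → ℝ :=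
  (List.finRange n).foldr (fun i g => (pd i)^[α i] g) f

/-- The flat Laplacian of signature `(p,q)`: `Δf = Σ_i ε_i ∂_i² f`. -/
def lap (p : ℕ) {n : ℕ} (f : (Fin n → ℝ) → ℝ) : (Fin n → ℝ) → ℝ :=
  fun x => ∑ i, eps p i * pd i (pd i f) x

/-- The Lie derivative of a `l`-density along the vector field `X = Σ_i X^i ∂_i`:
`L_X^l f = Σ_i X^i ∂_i f + l·(Σ_i ∂_i X^i)·f`. -/
def lieD {n : ℕ} (X : (Fin n → ℝ) → (Fin n → ℝ)) (l : ℝ)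
    (f : (Fin n → ℝ) → ℝ) : (Fin n → ℝ) → ℝ :=
  fun x => (∑ i, X x i * pd i f x) + l * (∑ i, pd i (fun y => X y i) x) * f x

/-- Translation generator `X_i = ∂_i`. -/
def Xtrans {n : ℕ} (i : Fin n) : (Fin n → ℝ) → (Fin n → ℝ) := fun _ => Pi.single i 1

/-- Rotation generator `X_{ij} = x_i ∂_j − x_j ∂_i` (with `x_i = ε_i x^i`). -/
def Xrot (p : ℕ) {n : ℕ} (i j : Fin n) : (Fin n → ℝ) → (Fin n → ℝ) :=
  fun x => (eps p i * x i) • (Pi.single j 1 : Fin n → ℝ) - (eps p j * x j) • (Pi.single i 1 : Fin n → ℝ)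

/-- The Euler vector field `X_0 = Σ_i x^i ∂_i`. -/
def Xeuler {n : ℕ} : (Fin n → ℝ) → (Fin n → ℝ) := fun x => x

/-- Inversion generator `X̄_i = (Σ_j ε_j (x^j)²) ∂_i − 2 x_i Σ_j x^j ∂_j`. -/
def Xinv (p : ℕ) {n : ℕ} (i : Fin n) : (Fin n → ℝ) → (Fin n → ℝ) :=
  fun x => (∑ j, eps p j * (x j) ^ 2) • (Pi.single i 1 : Fin n → ℝ) - (2 * (eps p i * x i)) • x

/-- The generators of the conformal Lie algebra `o(p+1,q+1)` acting on `ℝⁿ`. -/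
def confGens (p n : ℕ) : Set ((Fin n → ℝ) → (Fin n → ℝ)) :=
  Set.range (Xtrans (n := n)) ∪ {X | ∃ i j, X = Xrot p i j} ∪ {Xeuler} ∪ Set.range (Xinv p)

namespace Aux
variable (p : ℕ) {n : ℕ}

lemma eps_cases (j : Fin n) : eps p j = 1 ∨ eps p j = -1 := by
  unfold eps; split <;> simp

lemma hpow {E : Type*} [NormedAddCommGroup E] [NormedSpace ℝ E] {f : E → ℝ} {f' : E →L[ℝ] ℝ}
    {x : E} (h : HasFDerivAt f f' x) (m : ℕ) :
    HasFDerivAt (fun y => f y ^ m) (((m : ℝ) * f x ^ (m - 1)) • f') x :=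
  (hasDerivAt_pow m (f x)).comp_hasFDerivAt x h

lemma hasF_proj (j : Fin n) (x : Fin n → ℝ) :
    HasFDerivAt (fun y : Fin n → ℝ => y j)
      (ContinuousLinearMap.proj j : (Fin n → ℝ) →L[ℝ] ℝ) x :=
  hasFDerivAt_apply (𝕜 := ℝ) j x

def S (x : Fin n → ℝ) : ℝ := ∑ j, eps p j * (x j) ^ 2

def LS (x : Fin n → ℝ) : (Fin n → ℝ) →L[ℝ] ℝ :=
  ∑ j, (2 * eps p j * x j) • (ContinuousLinearMap.proj j : (Fin n → ℝ) →L[ℝ] ℝ)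

lemma hasF_S (x : Fin n → ℝ) : HasFDerivAt (S p) (LS p x) x := by
  unfold S LS
  apply HasFDerivAt.fun_sum
  intro j _
  have h := ((hpow (hasF_proj j x) 2).const_mul (eps p j))
  refine (h.congr_fderiv ?_)
  rw [smul_smul]
  norm_num
  ring_nf

lemma LS_apply (x : Fin n → ℝ) (j : Fin n) : LS p x (Pi.single j 1) = 2 * eps p j * x j := by
  simp [LS, Pi.single_apply]

lemma pd_eq {f : (Fin n → ℝ) → ℝ} {L : (Fin n → ℝ) →L[ℝ] ℝ} {x : Fin n → ℝ}
    (h : HasFDerivAt f L x) (i : Fin n) : pd i f x = L (Pi.single i 1) := by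
  simp only [pd, h.fderiv]

lemma sum_single (i : Fin n) (g : Fin n → ℝ) : (∑ j, (Pi.single i 1 : Fin n → ℝ) j * g j) = g i := by
  simp [Pi.single_apply]

lemma sum_single2 (i : Fin n) (g : Fin n → ℝ) : (∑ j, (Pi.single j 1 : Fin n → ℝ) i * g j) = g i := by
  simp [Pi.single_apply]

lemma pd_Spow (m : ℕ) (j : Fin n) :
    pd j (fun x => S p x ^ (m+1)) = fun x => (2*((m:ℝ)+1)*eps p j) * (S p x ^ m * x j) := by
  funext x
  rw [pd_eq (hpow (hasF_S p x) (m+1)) j]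
  simp [LS_apply]
  push_cast; ring

lemma pd_A (c : ℝ) (m : ℕ) (j : Fin n) :
    pd j (fun x => c * S p x ^ (m+1)) =
      fun x => (2*c*((m:ℝ)+1)*eps p j) * (S p x ^ m * x j) := by
  funext x
  rw [pd_eq ((hpow (hasF_S p x) (m+1)).const_mul c) j]
  simp [LS_apply]
  push_cast; ring

lemma lap_A (c : ℝ) (m : ℕ) :
    lap p (fun x : Fin n → ℝ => c * S p x ^ (m+1)) =
      fun x => (2*((m:ℝ)+1)*((n:ℝ)+2*m)) * c * S p x ^ m := by
  funext x
  have hterm : ∀ j ∈ (Finset.univ : Finset (Fin n)),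
      eps p j * pd j (pd j (fun x => c * S p x ^ (m+1))) x =
      2*c*((m:ℝ)+1) * S p x ^ m
        + (4*c*((m:ℝ)+1)*(m:ℝ) * S p x ^ (m-1)) * (eps p j * (x j)^2) := by
    intro j _
    simp only [pd_A]
    rw [pd_eq (((hpow (hasF_S p x) m).fun_mul (hasF_proj j x)).const_mul
      (2*c*((m:ℝ)+1)*eps p j)) j]
    simp [LS_apply, Pi.single_eq_same]
    rcases eps_cases p j with h | h <;> rw [h] <;> ring
  simp only [lap]
  rw [Finset.sum_congr rfl hterm, Finset.sum_add_distrib, Finset.sum_const,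
    ← Finset.mul_sum]
  have hS : (∑ j, eps p j * (x j) ^ 2) = S p x := rfl
  rw [hS]
  simp only [Finset.card_univ, Fintype.card_fin, nsmul_eq_mul]
  cases m with
  | zero => push_cast; ring
  | succ t =>
      have hp : S p x ^ t * S p x = S p x ^ (t+1) := (pow_succ _ _).symm
      simp only [Nat.succ_sub_one]
      push_cast
      linear_combination (4*c*((t:ℝ)+1+1)*((t:ℝ)+1)) * hp

lemma pd_B (c : ℝ) (m : ℕ) (i j : Fin n) :
    pd j (fun x => c * (x i * S p x ^ (m+1))) = fun x =>
      (2*c*((m:ℝ)+1)*eps p j) * (x i * (S p x ^ m * x j))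
        + (c * (Pi.single j 1 : Fin n → ℝ) i) * S p x ^ (m+1) := by
  funext x
  rw [pd_eq (((hasF_proj i x).fun_mul (hpow (hasF_S p x) (m+1))).const_mul c) j]
  simp [LS_apply]
  push_cast; ring

lemma lap_B (c : ℝ) (m : ℕ) (i : Fin n) :
    lap p (fun x : Fin n → ℝ => c * (x i * S p x ^ (m+1))) =
      fun x => (2*((m:ℝ)+1)*((n:ℝ)+2*m+2)) * c * (x i * S p x ^ m) := by
  funext x
  have hterm : ∀ j ∈ (Finset.univ : Finset (Fin n)),
      eps p j * pd j (pd j (fun x => c * (x i * S p x ^ (m+1)))) x =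
      2*c*((m:ℝ)+1) * (x i * S p x ^ m)
        + (4*c*((m:ℝ)+1)*(m:ℝ) * (x i * S p x ^ (m-1))) * (eps p j * (x j)^2)
        + (4*c*((m:ℝ)+1) * S p x ^ m) * ((Pi.single j 1 : Fin n → ℝ) i * x j) := by
    intro j _
    simp only [pd_B]
    rw [pd_eq ((((hasF_proj i x).fun_mul ((hpow (hasF_S p x) m).fun_mul (hasF_proj j x))).const_mul
        (2*c*((m:ℝ)+1)*eps p j)).fun_add
        ((hpow (hasF_S p x) (m+1)).const_mul (c * (Pi.single j 1 : Fin n → ℝ) i))) j]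
    simp [LS_apply, Pi.single_eq_same]
    rcases eps_cases p j with h | h <;> rw [h] <;> push_cast <;> ring
  simp only [lap]
  rw [Finset.sum_congr rfl hterm]
  rw [Finset.sum_add_distrib, Finset.sum_add_distrib, Finset.sum_const,
    ← Finset.mul_sum, ← Finset.mul_sum]
  have hS : (∑ j, eps p j * (x j) ^ 2) = S p x := rfl
  rw [hS, sum_single2]
  simp only [Finset.card_univ, Fintype.card_fin, nsmul_eq_mul]
  cases m with
  | zero => push_cast; ring
  | succ t =>
      have hp : S p x ^ t * S p x = S p x ^ (t+1) := (pow_succ _ _).symm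
      simp only [Nat.succ_sub_one]
      push_cast
      linear_combination (4*c*((t:ℝ)+1+1)*((t:ℝ)+1) * x i) * hp

def cA (n j : ℕ) : ℝ := ∏ m ∈ Finset.range j, (2*((m:ℝ)+1)*((n:ℝ)+2*m))
def cB (n j : ℕ) : ℝ := ∏ m ∈ Finset.range j, (2*((m:ℝ)+1)*((n:ℝ)+2*m+2))

lemma lapIter_A : ∀ (j : ℕ) (c : ℝ),
    (lap p)^[j] (fun x : Fin n → ℝ => c * S p x ^ j) = fun _ => cA n j * c
  | 0, c => by funext x; simp [cA]
  | (j+1), c => by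
      rw [Function.iterate_succ_apply, lap_A, lapIter_A j]
      funext x
      rw [show cA n (j+1) = cA n j * (2*((j:ℝ)+1)*((n:ℝ)+2*j)) from Finset.prod_range_succ _ _]
      ring

lemma lapIter_B (i : Fin n) : ∀ (j : ℕ) (c : ℝ),
    (lap p)^[j] (fun x : Fin n → ℝ => c * (x i * S p x ^ j)) = fun x => (cB n j * c) * x i
  | 0, c => by funext x; simp [cB]
  | (j+1), c => by
      rw [Function.iterate_succ_apply, lap_B, lapIter_B i j]
      funext x
      rw [show cB n (j+1) = cB n j * (2*((j:ℝ)+1)*((n:ℝ)+2*j+2)) from Finset.prod_range_succ _ _]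
      ring

lemma n_cB : ∀ j : ℕ, (n:ℝ) * cB n j = ((n:ℝ)+2*j) * cA n j
  | 0 => by simp [cA, cB]
  | (j+1) => by
      rw [show cA n (j+1) = cA n j * (2*((j:ℝ)+1)*((n:ℝ)+2*j)) from Finset.prod_range_succ _ _,
        show cB n (j+1) = cB n j * (2*((j:ℝ)+1)*((n:ℝ)+2*j+2)) from Finset.prod_range_succ _ _]
      push_cast
      linear_combination (2*((j:ℝ)+1)*((n:ℝ)+2*j+2)) * n_cB j

lemma cA_pos (hn1 : 1 ≤ n) (j : ℕ) : 0 < cA n j := by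
  apply Finset.prod_pos
  intro m _
  have h1 : (1:ℝ) ≤ (n:ℝ) := by exact_mod_cast hn1
  have hm : (0:ℝ) ≤ (m:ℝ) := Nat.cast_nonneg m
  nlinarith

lemma contDiff_Spow (K : ℕ) : ContDiff ℝ (⊤ : ℕ∞) (fun x : Fin n → ℝ => S p x ^ K) := by
  apply ContDiff.pow
  apply ContDiff.sum
  intro j _
  exact contDiff_const.mul
    (((ContinuousLinearMap.proj j : (Fin n → ℝ) →L[ℝ] ℝ).contDiff).pow 2)

lemma pd_const (C : ℝ) (j : Fin n) (x : Fin n → ℝ) : pd j (fun _ : Fin n → ℝ => C) x = 0 := by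
  rw [pd_eq (hasFDerivAt_const C x) j]; simp

lemma pd_coord_same (j : Fin n) (x : Fin n → ℝ) : pd j (fun y : Fin n → ℝ => y j) x = 1 := by
  rw [pd_eq (hasF_proj j x) j]; simp

lemma Xinv_apply (i : Fin n) (x : Fin n → ℝ) (j : Fin n) :
    Xinv p i x j = S p x * (Pi.single i 1 : Fin n → ℝ) j - (2*(eps p i * x i)) * x j := by
  simp [Xinv, S]

lemma div_Xinv (i : Fin n) (x : Fin n → ℝ) :
    (∑ j, pd j (fun y => Xinv p i y j) x) = -2*(n:ℝ)*(eps p i * x i) := by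
  have hterm : ∀ j ∈ (Finset.univ : Finset (Fin n)), pd j (fun y => Xinv p i y j) x
      = ((Pi.single i 1 : Fin n → ℝ) j) * (2*eps p j*x j)
        - ((2*eps p i) * x i + (2*eps p i) * ((Pi.single j 1 : Fin n → ℝ) i * x j)) := by
    intro j _
    have hfun : (fun y => Xinv p i y j)
        = fun y : Fin n → ℝ => ((Pi.single i 1 : Fin n → ℝ) j) * S p y
            - (2*eps p i) * (y i * y j) := by
      funext y; rw [Xinv_apply]; ring
    rw [hfun]
    rw [pd_eq (((hasF_S p x).const_mul ((Pi.single i 1 : Fin n → ℝ) j)).fun_sub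
      (((hasF_proj i x).fun_mul (hasF_proj j x)).const_mul (2*eps p i))) j]
    simp only [ContinuousLinearMap.sub_apply, ContinuousLinearMap.add_apply,
      ContinuousLinearMap.coe_sub', ContinuousLinearMap.coe_smul', Pi.sub_apply,
      ContinuousLinearMap.smul_apply, ContinuousLinearMap.proj_apply, smul_eq_mul,
      LS_apply, Pi.single_eq_same, Pi.smul_apply]
    ring
  rw [Finset.sum_congr rfl hterm, Finset.sum_sub_distrib, Finset.sum_add_distrib,
    Finset.sum_const, ← Finset.mul_sum, sum_single, sum_single2]
  simp only [Finset.card_univ, Fintype.card_fin, nsmul_eq_mul]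
  ring

lemma lieD_euler_const (w C : ℝ) :
    lieD (Xeuler (n := n)) w (fun _ => C) = fun _ => w * (n:ℝ) * C := by
  funext x
  simp only [lieD, Xeuler]
  simp [pd_const, pd_coord_same, Finset.card_univ, Fintype.card_fin]
  try ring

lemma lieD_euler_S (w : ℝ) (K : ℕ) :
    lieD (Xeuler (n := n)) w (fun x => S p x ^ (K+1))
      = fun x => (2*((K:ℝ)+1) + w * (n:ℝ)) * S p x ^ (K+1) := by
  funext x
  simp only [lieD, Xeuler, pd_Spow p]
  have h1 : ∀ j ∈ (Finset.univ : Finset (Fin n)),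
      x j * ((2*((K:ℝ)+1)*eps p j) * (S p x ^ K * x j))
      = (2*((K:ℝ)+1) * S p x ^ K) * (eps p j * (x j)^2) := fun j _ => by ring
  have h2 : ∀ j ∈ (Finset.univ : Finset (Fin n)), pd j (fun y : Fin n → ℝ => y j) x = 1 :=
    fun j _ => pd_coord_same j x
  rw [Finset.sum_congr rfl h1, ← Finset.mul_sum, Finset.sum_congr rfl h2, Finset.sum_const]
  have hS : (∑ j, eps p j * (x j) ^ 2) = S p x := rfl
  rw [hS]
  simp only [Finset.card_univ, Fintype.card_fin, nsmul_eq_mul]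
  rw [pow_succ]
  ring

lemma lieD_inv_const (i : Fin n) (w C : ℝ) :
    lieD (Xinv p i) w (fun _ => C) = fun x => w * (-2*(n:ℝ)*(eps p i * x i)) * C := by
  funext x
  simp only [lieD]
  rw [div_Xinv]
  simp [pd_const]

lemma lieD_inv_S (i : Fin n) (w : ℝ) (K : ℕ) :
    lieD (Xinv p i) w (fun x => S p x ^ (K+1))
      = fun x => ((-2*eps p i) * (((K:ℝ)+1) + w*(n:ℝ))) * (x i * S p x ^ (K+1)) := by
  funext x
  simp only [lieD, pd_Spow p]
  rw [div_Xinv]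
  have hX : ∀ j ∈ (Finset.univ : Finset (Fin n)),
      Xinv p i x j * ((2*((K:ℝ)+1)*eps p j) * (S p x ^ K * x j))
      = (2*((K:ℝ)+1)* S p x * S p x ^ K) * ((Pi.single i 1 : Fin n → ℝ) j * (eps p j * x j))
        - (4*((K:ℝ)+1)*eps p i * x i * S p x ^ K) * (eps p j * (x j)^2) := by
    intro j _
    rw [Xinv_apply]
    ring
  rw [Finset.sum_congr rfl hX, Finset.sum_sub_distrib, ← Finset.mul_sum, ← Finset.mul_sum,
    sum_single]
  have hS : (∑ j, eps p j * (x j) ^ 2) = S p x := rfl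
  rw [hS, pow_succ]
  ring


end Aux

/-- If `Δ^k` (for `k ≥ 1`) intertwines the actions on `λ`- and `μ`-densities of the Euler
field and of all the inversion generators `X̄_i`, then `λ = (n−2k)/(2n)` and
`μ = (n+2k)/(2n)`. -/
theorem laplacian_power_invariant_only_for_resonant_weights (p q n : ℕ) (hn : n = p + q)
    (hn1 : 1 ≤ n) (k : ℕ) (hk : 1 ≤ k) (l m : ℝ)
    (h0 : ∀ f : (Fin n → ℝ) → ℝ, ContDiff ℝ (⊤ : ℕ∞) f →
      lieD Xeuler m ((lap p)^[k] f) = (lap p)^[k] (lieD Xeuler l f))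
    (hi : ∀ i : Fin n, ∀ f : (Fin n → ℝ) → ℝ, ContDiff ℝ (⊤ : ℕ∞) f →
      lieD (Xinv p i) m ((lap p)^[k] f) = (lap p)^[k] (lieD (Xinv p i) l f)) :
    l = ((n : ℝ) - 2 * k) / (2 * n) ∧ m = ((n : ℝ) + 2 * k) / (2 * n) := by
  obtain ⟨K, rfl⟩ : ∃ K, k = K + 1 := ⟨k - 1, (Nat.succ_pred_eq_of_pos hk).symm⟩
  have hsm := Aux.contDiff_Spow p (n := n) (K+1)
  set i0 : Fin n := ⟨0, hn1⟩ with hi0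
  have hE := h0 _ hsm
  have hI := hi i0 _ hsm
  have hf1 : (fun x : Fin n → ℝ => Aux.S p x ^ (K+1))
      = fun x : Fin n → ℝ => (1:ℝ) * Aux.S p x ^ (K+1) := by funext x; ring
  have hlapf : (lap p)^[K+1] (fun x : Fin n → ℝ => Aux.S p x ^ (K+1))
      = fun _ => Aux.cA n (K+1) * 1 := by
    rw [hf1, Aux.lapIter_A p (K+1) 1]
  rw [hlapf, Aux.lieD_euler_const, Aux.lieD_euler_S, Aux.lapIter_A p (K+1)] at hE
  rw [hlapf, Aux.lieD_inv_const, Aux.lieD_inv_S, Aux.lapIter_B p i0 (K+1)] at hI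
  have e1 := congrFun hE (fun _ => (0:ℝ))
  have e2 := congrFun hI (Pi.single i0 (1:ℝ))
  simp only [Pi.single_eq_same] at e2
  have hcA0 : Aux.cA n (K+1) ≠ 0 := ne_of_gt (Aux.cA_pos hn1 (K+1))
  have hA' : m * (n:ℝ) = 2*((K:ℝ)+1) + l*(n:ℝ) := by
    apply mul_right_cancel₀ hcA0
    linear_combination e1
  have hE2 : (n:ℝ) * m * Aux.cA n (K+1) = (((K:ℝ)+1) + l*(n:ℝ)) * Aux.cB n (K+1) := by
    rcases Aux.eps_cases p i0 with h | h <;> rw [h] at e2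
    · linear_combination (-(1:ℝ)/2) * e2
    · linear_combination ((1:ℝ)/2) * e2
  have hn2 := Aux.n_cB (n := n) (K+1)
  push_cast at hn2
  have hB'' : (n:ℝ)*(n:ℝ)*m = (((K:ℝ)+1)+l*(n:ℝ))*((n:ℝ)+2*((K:ℝ)+1)) := by
    apply mul_right_cancel₀ hcA0
    linear_combination (n:ℝ) * hE2 + (((K:ℝ)+1)+l*(n:ℝ)) * hn2
  have hn0 : (0:ℝ) < (n:ℝ) := by exact_mod_cast hn1
  have hk0 : ((K:ℝ)+1) ≠ 0 := by positivity
  have hl2 : 2*l*(n:ℝ) = (n:ℝ) - 2*((K:ℝ)+1) := by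
    apply mul_right_cancel₀ hk0
    linear_combination (n:ℝ)*hA' - hB''
  constructor
  · rw [eq_div_iff (by positivity)]
    push_cast
    linear_combination hl2
  · rw [eq_div_iff (by positivity)]
    push_cast
    linear_combination 2*hA' + hl2

end
end

section
/- For all integers r, s, t ≥ 0 with k = r+s+t, all λ, μ, δ ∈ ℝ, and every index 1 ≤ i ≤ n, the operator M̃_i of the bilinear symbol action satisfies the polynomial identity M̃_i(R^{r,s,t}) = 2(2k − nδ)·x_i·R^{r,s,t} + (2r(2r + n(2λ−1))·R^{r−1,s,t} − s(s−1)·R^{r,s−2,t+1} + 2s(s + 2t + nμ − 1)·R^{r,s−1,t})·ξ_i + (2t(2t + n(2μ−1))·R^{r,s,t−1} − s(s−1)·R^{r+1,s−2,t} + 2s(s + 2r + nλ − 1)·R^{r,s−1,t})·η_i, where terms with a negative exponent are zero. -/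
noncomputable section

open MvPolynomial

/-- Index of the variable `x^j` among the `3n` variables `(x, ξ, η)`. -/
def xI {n : ℕ} (j : Fin n) : Fin n ⊕ Fin n ⊕ Fin n := Sum.inl j

/-- Index of the variable `ξ_j` among the `3n` variables `(x, ξ, η)`. -/
def ξI {n : ℕ} (j : Fin n) : Fin n ⊕ Fin n ⊕ Fin n := Sum.inr (Sum.inl j)

/-- Index of the variable `η_j` among the `3n` variables `(x, ξ, η)`. -/
def ηI {n : ℕ} (j : Fin n) : Fin n ⊕ Fin n ⊕ Fin n := Sum.inr (Sum.inr j)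

/-- The operator `M̃_i = L̂_i^δ − ξ_i·T_ξ − η_i·T_η
  + 2((E_ξ + nλ)·ε_i ∂_{ξ_i} + (E_η + nμ)·ε_i ∂_{η_i})` on polynomial symbols in the `3n`
variables `(x, ξ, η)`, where
`L̂_i^δ = (Σ_j ε_j (x^j)²)∂_{x^i} − 2x_i Σ_j x^j ∂_{x^j} − 2nδ·x_i
  − 2Σ_j ((ξ_i x_j − ξ_j x_i)∂_{ξ_j} + (η_i x_j − η_j x_i)∂_{η_j})
  + 2((Σ_j ξ_j x^j)·ε_i ∂_{ξ_i} + (Σ_j η_j x^j)·ε_i ∂_{η_i})`,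
`T_ξ = Σ_j ε_j ∂_{ξ_j}²`, `T_η = Σ_j ε_j ∂_{η_j}²`, `E_ξ = Σ_j ξ_j ∂_{ξ_j}`,
`E_η = Σ_j η_j ∂_{η_j}` (with `x_i = ε_i x^i`). -/
def Mt (p n : ℕ) (i : Fin n) (lam mu del : ℝ)
    (P : MvPolynomial (Fin n ⊕ Fin n ⊕ Fin n) ℝ) :
    MvPolynomial (Fin n ⊕ Fin n ⊕ Fin n) ℝ :=
  (∑ j, C (eps p j) * X (xI j) ^ 2) * pderiv (xI i) P
  - 2 * (C (eps p i) * X (xI i)) * (∑ j, X (xI j) * pderiv (xI j) P)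
  - C (2 * n * del) * (C (eps p i) * X (xI i)) * P
  - 2 * (∑ j, ((X (ξI i) * (C (eps p j) * X (xI j))
        - X (ξI j) * (C (eps p i) * X (xI i))) * pderiv (ξI j) P
      + (X (ηI i) * (C (eps p j) * X (xI j))
        - X (ηI j) * (C (eps p i) * X (xI i))) * pderiv (ηI j) P))
  + 2 * ((∑ j, X (ξI j) * X (xI j)) * (C (eps p i) * pderiv (ξI i) P)
      + (∑ j, X (ηI j) * X (xI j)) * (C (eps p i) * pderiv (ηI i) P))
  - X (ξI i) * (∑ j, C (eps p j) * pderiv (ξI j) (pderiv (ξI j) P))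
  - X (ηI i) * (∑ j, C (eps p j) * pderiv (ηI j) (pderiv (ηI j) P))
  + 2 * (C (eps p i) * ((∑ j, X (ξI j) * pderiv (ξI j) (pderiv (ξI i) P))
        + C ((n : ℝ) * lam) * pderiv (ξI i) P)
      + C (eps p i) * ((∑ j, X (ηI j) * pderiv (ηI j) (pderiv (ηI i) P))
        + C ((n : ℝ) * mu) * pderiv (ηI i) P))

/-- The monomial `R^{r,s,t} = R_ξξ^r R_ξη^s R_ηη^t` in the Weyl generators
`R_ξξ = Σ_j ε_j ξ_j²`, `R_ξη = Σ_j ε_j ξ_j η_j`, `R_ηη = Σ_j ε_j η_j²`. -/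
def Rmon (p n : ℕ) (r s t : ℕ) : MvPolynomial (Fin n ⊕ Fin n ⊕ Fin n) ℝ :=
  (∑ j, C (eps p j) * X (ξI j) ^ 2) ^ r * (∑ j, C (eps p j) * X (ξI j) * X (ηI j)) ^ s *
    (∑ j, C (eps p j) * X (ηI j) ^ 2) ^ t

namespace MtAux

lemma eps_cases (p : ℕ) {n : ℕ} (j : Fin n) : eps p j = 1 ∨ eps p j = -1 := by
  unfold eps; split_ifs <;> simp

abbrev Poly (n : ℕ) := MvPolynomial (Fin n ⊕ Fin n ⊕ Fin n) ℝ

abbrev Ra (p n : ℕ) : Poly n := ∑ j, C (eps p j) * X (ξI j) ^ 2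
abbrev Rb (p n : ℕ) : Poly n := ∑ j, C (eps p j) * X (ξI j) * X (ηI j)
abbrev Rd (p n : ℕ) : Poly n := ∑ j, C (eps p j) * X (ηI j) ^ 2

lemma Rmon_eq (p n r s t : ℕ) : Rmon p n r s t = Ra p n ^ r * Rb p n ^ s * Rd p n ^ t := rfl

@[simp] lemma pd_ξ_ξ {n : ℕ} (j k : Fin n) :
    pderiv (R := ℝ) (ξI j) (X (ξI k)) = if k = j then 1 else 0 := by
  simp [ξI, pderiv_X, Pi.single_apply]
@[simp] lemma pd_ξ_η {n : ℕ} (j k : Fin n) : pderiv (R := ℝ) (ξI j) (X (ηI k)) = 0 := by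
  simp [ξI, ηI]
@[simp] lemma pd_ξ_x {n : ℕ} (j k : Fin n) : pderiv (R := ℝ) (ξI j) (X (xI k)) = 0 := by
  simp [ξI, xI]
@[simp] lemma pd_η_η {n : ℕ} (j k : Fin n) :
    pderiv (R := ℝ) (ηI j) (X (ηI k)) = if k = j then 1 else 0 := by
  simp [ηI, pderiv_X, Pi.single_apply]
@[simp] lemma pd_η_ξ {n : ℕ} (j k : Fin n) : pderiv (R := ℝ) (ηI j) (X (ξI k)) = 0 := by
  simp [ξI, ηI]
@[simp] lemma pd_η_x {n : ℕ} (j k : Fin n) : pderiv (R := ℝ) (ηI j) (X (xI k)) = 0 := by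
  simp [ηI, xI]
@[simp] lemma pd_x_ξ {n : ℕ} (j k : Fin n) : pderiv (R := ℝ) (xI j) (X (ξI k)) = 0 := by
  simp [ξI, xI]
@[simp] lemma pd_x_η {n : ℕ} (j k : Fin n) : pderiv (R := ℝ) (xI j) (X (ηI k)) = 0 := by
  simp [ηI, xI]

@[simp] lemma pderiv_natCast {n : ℕ} {i : Fin n ⊕ Fin n ⊕ Fin n} (m : ℕ) :
    pderiv i ((m : Poly n)) = 0 := (pderiv i).map_natCast m
@[simp] lemma pderiv_ofNat {n : ℕ} {i : Fin n ⊕ Fin n ⊕ Fin n} (m : ℕ) [m.AtLeastTwo] :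
    pderiv i (OfNat.ofNat m : Poly n) = 0 := by
  have : (OfNat.ofNat m : Poly n) = ((m : ℕ) : Poly n) := by norm_cast
  rw [this]; exact (pderiv _).map_natCast m

lemma pd_Ra_ξ (p n : ℕ) (j : Fin n) : pderiv (ξI j) (Ra p n) = C (eps p j) * (2 * X (ξI j)) := by
  unfold Ra
  rw [map_sum, Finset.sum_eq_single j]
  · simp [pderiv_C_mul, pderiv_pow, Pi.single_apply, ξI, ηI, xI]
  · intro k _ hk
    simp [pderiv_C_mul, pderiv_pow, Pi.single_apply, ξI, ηI, xI, hk]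
  · simp
lemma pd_Ra_η (p n : ℕ) (j : Fin n) : pderiv (ηI j) (Ra p n) = 0 := by
  unfold Ra; rw [map_sum, Finset.sum_eq_zero]; intro k _
  simp [pderiv_C_mul, pderiv_pow, Pi.single_apply, ξI, ηI, xI]
lemma pd_Ra_x (p n : ℕ) (j : Fin n) : pderiv (xI j) (Ra p n) = 0 := by
  unfold Ra; rw [map_sum, Finset.sum_eq_zero]; intro k _
  simp [pderiv_C_mul, pderiv_pow, Pi.single_apply, ξI, ηI, xI]
lemma pd_Rb_ξ (p n : ℕ) (j : Fin n) : pderiv (ξI j) (Rb p n) = C (eps p j) * X (ηI j) := by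
  unfold Rb
  rw [map_sum, Finset.sum_eq_single j]
  · simp [pderiv_C_mul, pderiv_mul, Pi.single_apply, ξI, ηI, xI]
    try ring
  · intro k _ hk
    simp [pderiv_C_mul, pderiv_mul, Pi.single_apply, ξI, ηI, xI, hk]
  · simp
lemma pd_Rb_η (p n : ℕ) (j : Fin n) : pderiv (ηI j) (Rb p n) = C (eps p j) * X (ξI j) := by
  unfold Rb
  rw [map_sum, Finset.sum_eq_single j]
  · simp [pderiv_C_mul, pderiv_mul, Pi.single_apply, ξI, ηI, xI]
    try ring
  · intro k _ hk
    simp [pderiv_C_mul, pderiv_mul, Pi.single_apply, ξI, ηI, xI, hk]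
  · simp
lemma pd_Rb_x (p n : ℕ) (j : Fin n) : pderiv (xI j) (Rb p n) = 0 := by
  unfold Rb; rw [map_sum, Finset.sum_eq_zero]; intro k _
  simp [pderiv_C_mul, pderiv_mul, Pi.single_apply, ξI, ηI, xI]
lemma pd_Rd_η (p n : ℕ) (j : Fin n) : pderiv (ηI j) (Rd p n) = C (eps p j) * (2 * X (ηI j)) := by
  unfold Rd
  rw [map_sum, Finset.sum_eq_single j]
  · simp [pderiv_C_mul, pderiv_pow, Pi.single_apply, ξI, ηI, xI]
  · intro k _ hk
    simp [pderiv_C_mul, pderiv_pow, Pi.single_apply, ξI, ηI, xI, hk]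
  · simp
lemma pd_Rd_ξ (p n : ℕ) (j : Fin n) : pderiv (ξI j) (Rd p n) = 0 := by
  unfold Rd; rw [map_sum, Finset.sum_eq_zero]; intro k _
  simp [pderiv_C_mul, pderiv_pow, Pi.single_apply, ξI, ηI, xI]
lemma pd_Rd_x (p n : ℕ) (j : Fin n) : pderiv (xI j) (Rd p n) = 0 := by
  unfold Rd; rw [map_sum, Finset.sum_eq_zero]; intro k _
  simp [pderiv_C_mul, pderiv_pow, Pi.single_apply, ξI, ηI, xI]

lemma pd_Rmon_x (p n r s t : ℕ) (j : Fin n) : pderiv (xI j) (Rmon p n r s t) = 0 := by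
  rw [Rmon_eq]
  simp only [pderiv_mul, pderiv_pow, pd_Ra_x, pd_Rb_x, pd_Rd_x, mul_zero, zero_mul, add_zero,
    zero_add]

lemma pd_Rmon_ξ (p n r s t : ℕ) (j : Fin n) :
    pderiv (ξI j) (Rmon p n r s t)
      = ((2 * r : ℕ) : Poly n) * ((C (eps p j) * X (ξI j)) * Rmon p n (r - 1) s t)
        + (s : Poly n) * ((C (eps p j) * X (ηI j)) * Rmon p n r (s - 1) t) := by
  simp only [Rmon_eq]
  simp only [pderiv_mul, pderiv_pow, pd_Ra_ξ, pd_Rb_ξ, pd_Rd_ξ, mul_zero, add_zero]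
  push_cast
  ring

lemma pd_Rmon_η (p n r s t : ℕ) (j : Fin n) :
    pderiv (ηI j) (Rmon p n r s t)
      = (s : Poly n) * ((C (eps p j) * X (ξI j)) * Rmon p n r (s - 1) t)
        + ((2 * t : ℕ) : Poly n) * ((C (eps p j) * X (ηI j)) * Rmon p n r s (t - 1)) := by
  simp only [Rmon_eq]
  simp only [pderiv_mul, pderiv_pow, pd_Ra_η, pd_Rb_η, pd_Rd_η, mul_zero, zero_mul, add_zero,
    zero_add]
  push_cast
  ring


lemma cast_pred (n : ℕ) (r : ℕ) :
    ((r - 1 : ℕ) : Poly n) * (r : Poly n) = ((r : Poly n) - 1) * (r : Poly n) := by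
  cases r with
  | zero => simp
  | succ k => push_cast; ring

lemma AbsA (p n : ℕ) (r s t : ℕ) :
    (r : Poly n) * (Rmon p n (r - 1) s t * Ra p n) = (r : Poly n) * Rmon p n r s t := by
  cases r with
  | zero => simp
  | succ k =>
    simp only [Nat.add_sub_cancel, Rmon_eq]
    push_cast
    ring

lemma AbsB (p n : ℕ) (r s t : ℕ) :
    (s : Poly n) * (Rmon p n r (s - 1) t * Rb p n) = (s : Poly n) * Rmon p n r s t := by
  cases s with
  | zero => simp
  | succ k =>
    simp only [Nat.add_sub_cancel, Rmon_eq]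
    push_cast
    ring

lemma AbsD (p n : ℕ) (r s t : ℕ) :
    (t : Poly n) * (Rmon p n r s (t - 1) * Rd p n) = (t : Poly n) * Rmon p n r s t := by
  cases t with
  | zero => simp
  | succ k =>
    simp only [Nat.add_sub_cancel, Rmon_eq]
    push_cast
    ring

lemma AbsA2 (p n : ℕ) (r s t : ℕ) :
    ((r : Poly n) * ((r : Poly n) - 1)) * (Rmon p n (r - 1 - 1) s t * Ra p n)
      = ((r : Poly n) * ((r : Poly n) - 1)) * Rmon p n (r - 1) s t := by
  match r with
  | 0 => simp
  | 1 => norm_num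
  | (k+2) =>
    simp only [show k + 2 - 1 - 1 = k from rfl, show k + 2 - 1 = k + 1 from rfl, Rmon_eq]
    push_cast
    ring

lemma AbsB2 (p n : ℕ) (r s t : ℕ) :
    ((s : Poly n) * ((s : Poly n) - 1)) * (Rmon p n r (s - 1 - 1) t * Rb p n)
      = ((s : Poly n) * ((s : Poly n) - 1)) * Rmon p n r (s - 1) t := by
  match s with
  | 0 => simp
  | 1 => norm_num
  | (k+2) =>
    simp only [show k + 2 - 1 - 1 = k from rfl, show k + 2 - 1 = k + 1 from rfl, Rmon_eq]
    push_cast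
    ring

lemma AbsD2 (p n : ℕ) (r s t : ℕ) :
    ((t : Poly n) * ((t : Poly n) - 1)) * (Rmon p n r s (t - 1 - 1) * Rd p n)
      = ((t : Poly n) * ((t : Poly n) - 1)) * Rmon p n r s (t - 1) := by
  match t with
  | 0 => simp
  | 1 => norm_num
  | (k+2) =>
    simp only [show k + 2 - 1 - 1 = k from rfl, show k + 2 - 1 = k + 1 from rfl, Rmon_eq]
    push_cast
    ring

lemma RaSucc (p n : ℕ) (r s t : ℕ) :
    Rmon p n (r + 1) s t = Rmon p n r s t * Ra p n := by
  simp only [Rmon_eq]; ring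

lemma RdSucc (p n : ℕ) (r s t : ℕ) :
    Rmon p n r s (t + 1) = Rmon p n r s t * Rd p n := by
  simp only [Rmon_eq]; ring

lemma gG (n : ℕ) (r : ℕ) :
    ((r : Poly n)) * (((r - 1 : ℕ)) : Poly n) = (r : Poly n) * ((r : Poly n) - 1) := by
  cases r with
  | zero => simp
  | succ k => push_cast; ring

lemma Sx (p n r s t : ℕ) :
    (∑ j, X (xI j) * pderiv (xI j) (Rmon p n r s t)) = 0 :=
  Finset.sum_eq_zero fun j _ => by rw [pd_Rmon_x, mul_zero]

lemma S5 (p n r s t : ℕ) :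
    (∑ j, C (eps p j) * pderiv (ξI j) (pderiv (ξI j) (Rmon p n r s t)))
      = (n : Poly n) * (2 * (r : Poly n) * Rmon p n (r - 1) s t)
        + 4 * (r : Poly n) * ((r : Poly n) - 1) * Rmon p n (r - 1) s t
        + 4 * (r : Poly n) * (s : Poly n) * Rmon p n (r - 1) s t
        + (s : Poly n) * ((s : Poly n) - 1) * Rmon p n r (s - 2) (t + 1) := by
  have key : ∀ j ∈ (Finset.univ : Finset (Fin n)),
      C (eps p j) * pderiv (ξI j) (pderiv (ξI j) (Rmon p n r s t))
        = 2 * (r : Poly n) * Rmon p n (r - 1) s t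
          + (2 * (r : Poly n) * (2 * ((r - 1 : ℕ) : Poly n)) * Rmon p n (r - 1 - 1) s t)
              * (C (eps p j) * X (ξI j) ^ 2)
          + (4 * (r : Poly n) * (s : Poly n) * Rmon p n (r - 1) (s - 1) t)
              * (C (eps p j) * X (ξI j) * X (ηI j))
          + ((s : Poly n) * (((s - 1 : ℕ)) : Poly n) * Rmon p n r (s - 1 - 1) t)
              * (C (eps p j) * X (ηI j) ^ 2) := by
    intro j _
    rw [pd_Rmon_ξ p n r s t j]
    simp only [map_add, pderiv_mul, pderiv_ofNat, pderiv_natCast, pderiv_C, pd_ξ_ξ, pd_ξ_η,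
      pd_Rmon_ξ, zero_mul, mul_zero, add_zero, zero_add, mul_one, eq_self_iff_true, if_true]
    rcases eps_cases p j with h | h <;> rw [h] <;> simp only [map_one, map_neg] <;>
      push_cast <;> ring
  rw [Finset.sum_congr rfl key]
  simp only [Finset.sum_add_distrib, ← Finset.mul_sum, Finset.sum_const, Finset.card_univ,
    Fintype.card_fin, nsmul_eq_mul]
  have g1 := gG n r
  have g2 := gG n s
  have a2 := AbsA2 p n r s t
  have b2 := AbsB p n (r - 1) s t
  have d2 := RdSucc p n r (s - 2) t
  have hs : s - 1 - 1 = s - 2 := by omega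
  rw [hs]
  linear_combination (4 * (Rmon p n (r - 1 - 1) s t * Ra p n)) * g1 + 4 * a2
    + (4 * (r : Poly n)) * b2 + (Rmon p n r (s - 2) t * Rd p n) * g2
    - ((s : Poly n) * ((s : Poly n) - 1)) * d2

lemma S6 (p n r s t : ℕ) :
    (∑ j, C (eps p j) * pderiv (ηI j) (pderiv (ηI j) (Rmon p n r s t)))
      = (n : Poly n) * (2 * (t : Poly n) * Rmon p n r s (t - 1))
        + 4 * (t : Poly n) * ((t : Poly n) - 1) * Rmon p n r s (t - 1)
        + 4 * (s : Poly n) * (t : Poly n) * Rmon p n r s (t - 1)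
        + (s : Poly n) * ((s : Poly n) - 1) * Rmon p n (r + 1) (s - 2) t := by
  have key : ∀ j ∈ (Finset.univ : Finset (Fin n)),
      C (eps p j) * pderiv (ηI j) (pderiv (ηI j) (Rmon p n r s t))
        = 2 * (t : Poly n) * Rmon p n r s (t - 1)
          + ((s : Poly n) * (((s - 1 : ℕ)) : Poly n) * Rmon p n r (s - 1 - 1) t)
              * (C (eps p j) * X (ξI j) ^ 2)
          + (4 * (s : Poly n) * (t : Poly n) * Rmon p n r (s - 1) (t - 1))
              * (C (eps p j) * X (ξI j) * X (ηI j))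
          + (2 * (t : Poly n) * (2 * ((t - 1 : ℕ) : Poly n)) * Rmon p n r s (t - 1 - 1))
              * (C (eps p j) * X (ηI j) ^ 2) := by
    intro j _
    rw [pd_Rmon_η p n r s t j]
    simp only [map_add, pderiv_mul, pderiv_ofNat, pderiv_natCast, pderiv_C, pd_η_η, pd_η_ξ,
      pd_Rmon_η, zero_mul, mul_zero, add_zero, zero_add, mul_one, eq_self_iff_true, if_true]
    rcases eps_cases p j with h | h <;> rw [h] <;> simp only [map_one, map_neg] <;>
      push_cast <;> ring
  rw [Finset.sum_congr rfl key]
  simp only [Finset.sum_add_distrib, ← Finset.mul_sum, Finset.sum_const, Finset.card_univ,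
    Fintype.card_fin, nsmul_eq_mul]
  have g1 := gG n t
  have g2 := gG n s
  have a2 := AbsD2 p n r s t
  have b2 := AbsB p n r s (t - 1)
  have d2 := RaSucc p n r (s - 2) t
  have hs : s - 1 - 1 = s - 2 := by omega
  rw [hs]
  linear_combination (4 * (Rmon p n r s (t - 1 - 1) * Rd p n)) * g1 + 4 * a2
    + (4 * (t : Poly n)) * b2 + (Rmon p n r (s - 2) t * Ra p n) * g2
    - ((s : Poly n) * ((s : Poly n) - 1)) * d2

lemma S3 (p n r s t : ℕ) (i : Fin n) :
    (∑ j, ((X (ξI i) * (C (eps p j) * X (xI j))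
        - X (ξI j) * (C (eps p i) * X (xI i))) * pderiv (ξI j) (Rmon p n r s t)
      + (X (ηI i) * (C (eps p j) * X (xI j))
        - X (ηI j) * (C (eps p i) * X (xI i))) * pderiv (ηI j) (Rmon p n r s t)))
      = X (ξI i) * (2 * (r : Poly n) * (Rmon p n (r - 1) s t * (∑ j, X (ξI j) * X (xI j)))
            + (s : Poly n) * (Rmon p n r (s - 1) t * (∑ j, X (ηI j) * X (xI j))))
        + X (ηI i) * ((s : Poly n) * (Rmon p n r (s - 1) t * (∑ j, X (ξI j) * X (xI j)))
            + 2 * (t : Poly n) * (Rmon p n r s (t - 1) * (∑ j, X (ηI j) * X (xI j))))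
        - 2 * ((r : Poly n) + (s : Poly n) + (t : Poly n))
            * ((C (eps p i) * X (xI i)) * Rmon p n r s t) := by
  have key : ∀ j ∈ (Finset.univ : Finset (Fin n)),
      ((X (ξI i) * (C (eps p j) * X (xI j))
        - X (ξI j) * (C (eps p i) * X (xI i))) * pderiv (ξI j) (Rmon p n r s t)
      + (X (ηI i) * (C (eps p j) * X (xI j))
        - X (ηI j) * (C (eps p i) * X (xI i))) * pderiv (ηI j) (Rmon p n r s t))
        = (X (ξI i) * (2 * (r : Poly n) * Rmon p n (r - 1) s t)) * (X (ξI j) * X (xI j))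
          + (X (ξI i) * ((s : Poly n) * Rmon p n r (s - 1) t)) * (X (ηI j) * X (xI j))
          + (X (ηI i) * ((s : Poly n) * Rmon p n r (s - 1) t)) * (X (ξI j) * X (xI j))
          + (X (ηI i) * (2 * (t : Poly n) * Rmon p n r s (t - 1))) * (X (ηI j) * X (xI j))
          - ((C (eps p i) * X (xI i)) * (2 * (r : Poly n) * Rmon p n (r - 1) s t))
              * (C (eps p j) * X (ξI j) ^ 2)
          - ((C (eps p i) * X (xI i)) * (2 * (s : Poly n) * Rmon p n r (s - 1) t))
              * (C (eps p j) * X (ξI j) * X (ηI j))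
          - ((C (eps p i) * X (xI i)) * (2 * (t : Poly n) * Rmon p n r s (t - 1)))
              * (C (eps p j) * X (ηI j) ^ 2) := by
    intro j _
    rw [pd_Rmon_ξ p n r s t j, pd_Rmon_η p n r s t j]
    rcases eps_cases p j with h | h <;> rw [h] <;> simp only [map_one, map_neg] <;>
      push_cast <;> ring
  rw [Finset.sum_congr rfl key]
  simp only [Finset.sum_add_distrib, Finset.sum_sub_distrib, ← Finset.mul_sum]
  have a1 := AbsA p n r s t
  have b1 := AbsB p n r s t
  have d1 := AbsD p n r s t
  linear_combination (-2 * (C (eps p i) * X (xI i))) * a1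
    + (-2 * (C (eps p i) * X (xI i))) * b1 + (-2 * (C (eps p i) * X (xI i))) * d1

lemma S7ξ (p n r s t : ℕ) (i : Fin n) :
    (∑ j, X (ξI j) * pderiv (ξI j) (pderiv (ξI i) (Rmon p n r s t)))
      = (2 * (r : Poly n) + 4 * (r : Poly n) * ((r : Poly n) - 1)
            + 2 * (r : Poly n) * (s : Poly n))
          * ((C (eps p i) * X (ξI i)) * Rmon p n (r - 1) s t)
        + (2 * (r : Poly n) * (s : Poly n) + (s : Poly n) * ((s : Poly n) - 1))
          * ((C (eps p i) * X (ηI i)) * Rmon p n r (s - 1) t) := by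
  have key : ∀ j ∈ (Finset.univ : Finset (Fin n)),
      X (ξI j) * pderiv (ξI j) (pderiv (ξI i) (Rmon p n r s t))
        = (if i = j then 2 * (r : Poly n) * ((C (eps p i) * X (ξI j)) * Rmon p n (r - 1) s t)
            else 0)
          + (2 * (r : Poly n) * (2 * ((r - 1 : ℕ) : Poly n))
                * ((C (eps p i) * X (ξI i)) * Rmon p n (r - 1 - 1) s t)
              + 2 * (r : Poly n) * (s : Poly n)
                * ((C (eps p i) * X (ηI i)) * Rmon p n (r - 1) (s - 1) t))
              * (C (eps p j) * X (ξI j) ^ 2)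
          + (2 * (r : Poly n) * (s : Poly n)
                * ((C (eps p i) * X (ξI i)) * Rmon p n (r - 1) (s - 1) t)
              + (s : Poly n) * ((s - 1 : ℕ) : Poly n)
                * ((C (eps p i) * X (ηI i)) * Rmon p n r (s - 1 - 1) t))
              * (C (eps p j) * X (ξI j) * X (ηI j)) := by
    intro j _
    rw [pd_Rmon_ξ p n r s t i]
    simp only [map_add, pderiv_mul, pderiv_ofNat, pderiv_natCast, pderiv_C, pd_ξ_ξ, pd_ξ_η,
      pd_Rmon_ξ, zero_mul, mul_zero, add_zero, zero_add, mul_one]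
    by_cases hij : i = j
    · subst hij
      simp only [if_pos rfl]
      push_cast
      ring
    · simp only [if_neg hij, zero_mul, mul_zero, add_zero, zero_add]
      push_cast
      ring
  rw [Finset.sum_congr rfl key]
  simp only [Finset.sum_add_distrib, ← Finset.mul_sum, Finset.sum_ite_eq, Finset.mem_univ,
    if_true]
  have g1 := gG n r
  have g2 := gG n s
  have a2 := AbsA2 p n r s t
  have aa := AbsA p n r (s - 1) t
  have bb := AbsB p n (r - 1) s t
  have b2 := AbsB2 p n r s t
  linear_combination
    (4 * ((C (eps p i) * X (ξI i)) * (Rmon p n (r - 1 - 1) s t * Ra p n))) * g1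
    + (4 * (C (eps p i) * X (ξI i))) * a2
    + (2 * (s : Poly n) * (C (eps p i) * X (ηI i))) * aa
    + (2 * (r : Poly n) * (C (eps p i) * X (ξI i))) * bb
    + ((C (eps p i) * X (ηI i)) * (Rmon p n r (s - 1 - 1) t * Rb p n)) * g2
    + (C (eps p i) * X (ηI i)) * b2

lemma S7η (p n r s t : ℕ) (i : Fin n) :
    (∑ j, X (ηI j) * pderiv (ηI j) (pderiv (ηI i) (Rmon p n r s t)))
      = ((s : Poly n) * ((s : Poly n) - 1) + 2 * (s : Poly n) * (t : Poly n))
          * ((C (eps p i) * X (ξI i)) * Rmon p n r (s - 1) t)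
        + (2 * (t : Poly n) + 4 * (t : Poly n) * ((t : Poly n) - 1)
            + 2 * (s : Poly n) * (t : Poly n))
          * ((C (eps p i) * X (ηI i)) * Rmon p n r s (t - 1)) := by
  have key : ∀ j ∈ (Finset.univ : Finset (Fin n)),
      X (ηI j) * pderiv (ηI j) (pderiv (ηI i) (Rmon p n r s t))
        = (if i = j then 2 * (t : Poly n) * ((C (eps p i) * X (ηI j)) * Rmon p n r s (t - 1))
            else 0)
          + ((s : Poly n) * ((s - 1 : ℕ) : Poly n)
                * ((C (eps p i) * X (ξI i)) * Rmon p n r (s - 1 - 1) t)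
              + 2 * (s : Poly n) * (t : Poly n)
                * ((C (eps p i) * X (ηI i)) * Rmon p n r (s - 1) (t - 1)))
              * (C (eps p j) * X (ξI j) * X (ηI j))
          + (2 * (s : Poly n) * (t : Poly n)
                * ((C (eps p i) * X (ξI i)) * Rmon p n r (s - 1) (t - 1))
              + 2 * (t : Poly n) * (2 * ((t - 1 : ℕ) : Poly n))
                * ((C (eps p i) * X (ηI i)) * Rmon p n r s (t - 1 - 1)))
              * (C (eps p j) * X (ηI j) ^ 2) := by
    intro j _
    rw [pd_Rmon_η p n r s t i]
    simp only [map_add, pderiv_mul, pderiv_ofNat, pderiv_natCast, pderiv_C, pd_η_η, pd_η_ξ,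
      pd_Rmon_η, zero_mul, mul_zero, add_zero, zero_add, mul_one]
    by_cases hij : i = j
    · subst hij
      simp only [if_pos rfl]
      push_cast
      ring
    · simp only [if_neg hij, zero_mul, mul_zero, add_zero, zero_add]
      push_cast
      ring
  rw [Finset.sum_congr rfl key]
  simp only [Finset.sum_add_distrib, ← Finset.mul_sum, Finset.sum_ite_eq, Finset.mem_univ,
    if_true]
  have g1 := gG n t
  have g2 := gG n s
  have d2 := AbsD2 p n r s t
  have dd := AbsD p n r (s - 1) t
  have bb := AbsB p n r s (t - 1)
  have b2 := AbsB2 p n r s t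
  linear_combination
    (4 * ((C (eps p i) * X (ηI i)) * (Rmon p n r s (t - 1 - 1) * Rd p n))) * g1
    + (4 * (C (eps p i) * X (ηI i))) * d2
    + (2 * (s : Poly n) * (C (eps p i) * X (ξI i))) * dd
    + (2 * (t : Poly n) * (C (eps p i) * X (ηI i))) * bb
    + ((C (eps p i) * X (ξI i)) * (Rmon p n r (s - 1 - 1) t * Rb p n)) * g2
    + (C (eps p i) * X (ξI i)) * b2

end MtAux

open MtAux

/-- The action of `M̃_i` on the monomial `R^{r,s,t}` (with `k = r+s+t`); the terms whose
index would be negative carry a vanishing coefficient, so natural subtraction is harmless. -/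
theorem Mt_apply_Rmon (p q n : ℕ) (hn : n = p + q) (hn1 : 1 ≤ n)
    (r s t : ℕ) (k : ℕ) (hk : k = r + s + t) (lam mu del : ℝ) (i : Fin n) :
    Mt p n i lam mu del (Rmon p n r s t)
      = C (2 * (2 * (k : ℝ) - n * del)) * (C (eps p i) * X (xI i)) * Rmon p n r s t
        + (C (2 * (r : ℝ) * (2 * r + n * (2 * lam - 1))) * Rmon p n (r - 1) s t
            - C ((s : ℝ) * ((s : ℝ) - 1)) * Rmon p n r (s - 2) (t + 1)
            + C (2 * (s : ℝ) * ((s : ℝ) + 2 * t + n * mu - 1)) * Rmon p n r (s - 1) t)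
          * X (ξI i)
        + (C (2 * (t : ℝ) * (2 * t + n * (2 * mu - 1))) * Rmon p n r s (t - 1)
            - C ((s : ℝ) * ((s : ℝ) - 1)) * Rmon p n (r + 1) (s - 2) t
            + C (2 * (s : ℝ) * ((s : ℝ) + 2 * r + n * lam - 1)) * Rmon p n r (s - 1) t)
          * X (ηI i) := by
  subst hk
  unfold Mt
  rw [S3 p n r s t i, S5 p n r s t, S6 p n r s t, S7ξ p n r s t i, S7η p n r s t i,
    Sx p n r s t, pd_Rmon_x p n r s t i, pd_Rmon_ξ p n r s t i, pd_Rmon_η p n r s t i]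
  rcases eps_cases p i with h | h <;> rw [h] <;>
    simp only [map_one, map_neg, map_mul, map_add, map_sub, map_ofNat, map_natCast] <;>
    push_cast <;> ring

end
end

section
/- For all integers r, s, t ≥ 0, all λ, μ, ν ∈ ℝ, and all smooth f, g : ℝⁿ → ℝ, the bilinear operator B^{r,s,t} = Op(R_ξξ^r R_ξη^s R_ηη^t) satisfies L_{X_0}^{ν}(B^{r,s,t}(f,g)) − B^{r,s,t}(L_{X_0}^{λ} f, g) − B^{r,s,t}(f, L_{X_0}^{μ} g) = (n(ν−λ−μ) − 2(r+s+t))·B^{r,s,t}(f,g), where X_0 = Σ_i x^i ∂_i. -/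
noncomputable section

open MvPolynomial

/-- The bilinear differential operator associated to a constant-coefficient polynomial
symbol `P = Σ a_{α,γ} ξ^α η^γ`: `Op(P)(f,g) = Σ a_{α,γ} (∂^α f)(∂^γ g)`.  Here `Sum.inl`
indexes the variables `ξ_j` and `Sum.inr` the variables `η_j`. -/
def Op2 {n : ℕ} (P : MvPolynomial (Fin n ⊕ Fin n) ℝ)
    (f g : (Fin n → ℝ) → ℝ) : (Fin n → ℝ) → ℝ :=
  fun x => ∑ mo ∈ P.support, P.coeff mo *
    pdIter (fun i => mo (Sum.inl i)) f x * pdIter (fun i => mo (Sum.inr i)) g x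

/-- The bilinear operator `B^{r,s,t} = Op(R_ξξ^r R_ξη^s R_ηη^t)`. -/
def Bmon (p n : ℕ) (r s t : ℕ) (f g : (Fin n → ℝ) → ℝ) : (Fin n → ℝ) → ℝ :=
  Op2 ((∑ j, C (eps p j) * X (Sum.inl j) ^ 2) ^ r *
    (∑ j, C (eps p j) * X (Sum.inl j) * X (Sum.inr j)) ^ s *
    (∑ j, C (eps p j) * X (Sum.inr j) ^ 2) ^ t) f g

section Helpers

variable {n : ℕ}

theorem contDiff_pd {f : (Fin n → ℝ) → ℝ} (hf : ContDiff ℝ (⊤ : ℕ∞) f) (i : Fin n) :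
    ContDiff ℝ (⊤ : ℕ∞) (pd i f) := by
  exact (hf.fderiv_right (m := (⊤ : ℕ∞)) (by simp)).clm_apply contDiff_const

theorem pd_add {f g : (Fin n → ℝ) → ℝ} (hf : Differentiable ℝ f) (hg : Differentiable ℝ g)
    (i : Fin n) : pd i (fun x => f x + g x) = fun x => pd i f x + pd i g x := by
  funext x
  simp [pd, fderiv_fun_add (hf x) (hg x)]

theorem pd_mul {f g : (Fin n → ℝ) → ℝ} (hf : Differentiable ℝ f) (hg : Differentiable ℝ g)
    (i : Fin n) : pd i (fun x => f x * g x) = fun x => pd i f x * g x + f x * pd i g x := by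
  funext x
  simp [pd, fderiv_fun_mul (hf x) (hg x)]; ring

theorem pd_const_mul {f : (Fin n → ℝ) → ℝ} (hf : Differentiable ℝ f) (c : ℝ)
    (i : Fin n) : pd i (fun x => c * f x) = fun x => c * pd i f x := by
  funext x
  simp [pd, fderiv_const_mul (hf x)]

theorem pd_sum {ι : Type*} (s : Finset ι) {f : ι → (Fin n → ℝ) → ℝ}
    (hf : ∀ j ∈ s, Differentiable ℝ (f j)) (i : Fin n) :
    pd i (fun x => ∑ j ∈ s, f j x) = fun x => ∑ j ∈ s, pd i (f j) x := by
  funext x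
  simp only [pd]
  rw [fderiv_fun_sum (fun j hj => (hf j hj) x)]
  simp

theorem pd_coord (i j : Fin n) (x : Fin n → ℝ) :
    pd i (fun y => y j) x = if j = i then 1 else 0 := by
  have : (fun y : Fin n → ℝ => y j) = (ContinuousLinearMap.proj j : (Fin n → ℝ) →L[ℝ] ℝ) := rfl
  rw [pd, this, ContinuousLinearMap.fderiv]
  simp [ContinuousLinearMap.proj, Pi.single_apply]

theorem pd_comm {f : (Fin n → ℝ) → ℝ} (hf : ContDiff ℝ (⊤ : ℕ∞) f) (i j : Fin n) :
    pd i (pd j f) = pd j (pd i f) := by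
  funext x
  have hd : Differentiable ℝ (fderiv ℝ f) :=
    (hf.fderiv_right (m := (⊤ : ℕ∞)) (by simp)).differentiable (by simp)
  have key : ∀ v w : Fin n → ℝ, fderiv ℝ (fun y => fderiv ℝ f y v) x w
      = fderiv ℝ (fderiv ℝ f) x w v := by
    intro v w
    rw [fderiv_clm_apply (hd x) (differentiableAt_const v)]
    simp
  have symm : IsSymmSndFDerivAt ℝ f x :=
    (hf.contDiffAt).isSymmSndFDerivAt (by rw [minSmoothness_of_isRCLikeNormedField]; exact WithTop.coe_le_coe.mpr le_top)
  show fderiv ℝ (fun y => fderiv ℝ f y (Pi.single j 1)) x (Pi.single i 1)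
      = fderiv ℝ (fun y => fderiv ℝ f y (Pi.single i 1)) x (Pi.single j 1)
  rw [key, key, symm]

/-- `Efun c f = Σ_i x^i ∂_i f + c·f`. -/
def Efun (c : ℝ) (f : (Fin n → ℝ) → ℝ) : (Fin n → ℝ) → ℝ :=
  fun x => (∑ i, x i * pd i f x) + c * f x

theorem pd_efun {f : (Fin n → ℝ) → ℝ} (hf : ContDiff ℝ (⊤ : ℕ∞) f) (c : ℝ) (j : Fin n) :
    pd j (Efun c f) = Efun (c + 1) (pd j f) := by
  have hdf : Differentiable ℝ f := hf.differentiable (by simp)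
  have hterm : ∀ i : Fin n, Differentiable ℝ (fun x => x i * pd i f x) := fun i =>
    ((contDiff_apply ℝ ℝ i).mul (contDiff_pd hf i)).differentiable (by simp)
  have hsum : Differentiable ℝ (fun x => ∑ i, x i * pd i f x) :=
    Differentiable.fun_sum (fun i _ => hterm i)
  have hcf : Differentiable ℝ (fun x => c * f x) := hdf.const_mul c
  funext x
  have e1 : pd j (Efun c f) x = pd j (fun x => ∑ i, x i * pd i f x) x
      + pd j (fun x => c * f x) x := by
    rw [show Efun c f = fun x => (∑ i, x i * pd i f x) + c * f x from rfl,
      pd_add hsum hcf]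
  rw [e1, pd_sum Finset.univ (fun i _ => hterm i) j, pd_const_mul hdf c j]
  have e2 : ∀ i : Fin n, pd j (fun x => x i * pd i f x) x
      = (if i = j then 1 else 0) * pd i f x + x i * pd i (pd j f) x := by
    intro i
    rw [pd_mul (fun x => differentiable_pi.mp differentiable_id i x)
        ((contDiff_pd hf i).differentiable (by simp)) j]
    simp only [pd_coord, pd_comm hf j i]
  simp only [e2]
  rw [Finset.sum_add_distrib]
  simp only [ite_mul, one_mul, zero_mul, Finset.sum_ite_eq', Finset.mem_univ, if_true]
  show pd j f x + _ + _ = Efun (c+1) (pd j f) x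
  simp only [Efun]
  ring

theorem pd_iterate_efun {f : (Fin n → ℝ) → ℝ} (hf : ContDiff ℝ (⊤ : ℕ∞) f) (c : ℝ) (j : Fin n)
    (k : ℕ) : (pd j)^[k] (Efun c f) = Efun (c + k) ((pd j)^[k] f) := by
  induction k generalizing f c with
  | zero => simp
  | succ k ih =>
    rw [Function.iterate_succ_apply, pd_efun hf c j, ih (contDiff_pd hf j) (c+1),
      Function.iterate_succ_apply]
    push_cast; ring_nf

theorem contDiff_pd_iterate {f : (Fin n → ℝ) → ℝ} (hf : ContDiff ℝ (⊤ : ℕ∞) f) (j : Fin n) (k : ℕ) :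
    ContDiff ℝ (⊤ : ℕ∞) ((pd j)^[k] f) := by
  induction k generalizing f with
  | zero => exact hf
  | succ k ih => rw [Function.iterate_succ_apply]; exact ih (contDiff_pd hf j)

theorem contDiff_foldr (L : List (Fin n)) (α : Fin n → ℕ) {f : (Fin n → ℝ) → ℝ}
    (hf : ContDiff ℝ (⊤ : ℕ∞) f) :
    ContDiff ℝ (⊤ : ℕ∞) (L.foldr (fun i g => (pd i)^[α i] g) f) := by
  induction L with
  | nil => exact hf
  | cons i L ih => exact contDiff_pd_iterate ih i (α i)

theorem foldr_efun (L : List (Fin n)) (α : Fin n → ℕ) {f : (Fin n → ℝ) → ℝ}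
    (hf : ContDiff ℝ (⊤ : ℕ∞) f) (c : ℝ) :
    L.foldr (fun i g => (pd i)^[α i] g) (Efun c f)
      = Efun (c + (L.map α).sum) (L.foldr (fun i g => (pd i)^[α i] g) f) := by
  induction L with
  | nil => simp
  | cons i L ih =>
    simp only [List.foldr_cons, List.map_cons, List.sum_cons]
    rw [ih, pd_iterate_efun (contDiff_foldr L α hf)]
    push_cast
    ring_nf

theorem contDiff_pdIter (α : Fin n → ℕ) {f : (Fin n → ℝ) → ℝ} (hf : ContDiff ℝ (⊤ : ℕ∞) f) :
    ContDiff ℝ (⊤ : ℕ∞) (pdIter α f) := contDiff_foldr _ α hf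

theorem pdIter_efun (α : Fin n → ℕ) {f : (Fin n → ℝ) → ℝ} (hf : ContDiff ℝ (⊤ : ℕ∞) f) (c : ℝ) :
    pdIter α (Efun c f) = Efun (c + ∑ i, (α i : ℝ)) (pdIter α f) := by
  rw [pdIter, pdIter, foldr_efun _ α hf c]
  congr 1
  rw [Fin.sum_univ_def]
  push_cast
  rw [List.map_map]
  rfl

theorem lieD_euler_eq_efun (l : ℝ) (f : (Fin n → ℝ) → ℝ) :
    lieD Xeuler l f = Efun (l * n) f := by
  funext x
  simp only [lieD, Xeuler, Efun]
  congr 2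
  have : ∀ i : Fin n, pd i (fun y : Fin n → ℝ => y i) x = 1 := by
    intro i; rw [pd_coord i i x]; simp
  rw [Finset.sum_congr rfl (fun i _ => this i)]
  simp [mul_assoc]

theorem pd_cmul_mul (c : ℝ) {F G : (Fin n → ℝ) → ℝ}
    (hF : ContDiff ℝ (⊤ : ℕ∞) F) (hG : ContDiff ℝ (⊤ : ℕ∞) G) (i : Fin n) :
    pd i (fun y => c * F y * G y) = fun y => c * (pd i F y * G y + F y * pd i G y) := by
  have e : (fun y => c * F y * G y) = fun y => c * (F y * G y) := by funext y; ring
  rw [e, pd_const_mul (f := fun y => F y * G y) ((hF.mul hG).differentiable (by simp)) c i]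
  funext y
  rw [show pd i (fun y => F y * G y) = fun y => pd i F y * G y + F y * pd i G y from
    pd_mul (hF.differentiable (by simp)) (hG.differentiable (by simp)) i]

theorem Bpoly_homog (p n : ℕ) (r s t : ℕ) :
    MvPolynomial.IsHomogeneous
      ((∑ j, C (eps p j) * X (Sum.inl j) ^ 2) ^ r *
        (∑ j, C (eps p j) * X (Sum.inl j) * X (Sum.inr j)) ^ s *
        (∑ j, C (eps p j) * X (Sum.inr j) ^ 2) ^ t
        : MvPolynomial (Fin n ⊕ Fin n) ℝ) (2 * (r + s + t)) := by
  have h1 : MvPolynomial.IsHomogeneous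
      (∑ j, C (eps p j) * X (Sum.inl j) ^ 2 : MvPolynomial (Fin n ⊕ Fin n) ℝ) 2 := by
    apply MvPolynomial.IsHomogeneous.sum
    intro j _
    simpa using (isHomogeneous_C _ (eps p j)).mul ((isHomogeneous_X ℝ (Sum.inl j)).pow 2)
  have h2 : MvPolynomial.IsHomogeneous
      (∑ j, C (eps p j) * X (Sum.inl j) * X (Sum.inr j) : MvPolynomial (Fin n ⊕ Fin n) ℝ) 2 := by
    apply MvPolynomial.IsHomogeneous.sum
    intro j _
    simpa using ((isHomogeneous_C _ (eps p j)).mul (isHomogeneous_X ℝ (Sum.inl j))).mul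
      (isHomogeneous_X ℝ (Sum.inr j))
  have h3 : MvPolynomial.IsHomogeneous
      (∑ j, C (eps p j) * X (Sum.inr j) ^ 2 : MvPolynomial (Fin n ⊕ Fin n) ℝ) 2 := by
    apply MvPolynomial.IsHomogeneous.sum
    intro j _
    simpa using (isHomogeneous_C _ (eps p j)).mul ((isHomogeneous_X ℝ (Sum.inr j)).pow 2)
  have := ((h1.pow r).mul (h2.pow s)).mul (h3.pow t)
  convert this using 1
  ring

theorem support_degree {n : ℕ} {P : MvPolynomial (Fin n ⊕ Fin n) ℝ} {D : ℕ}
    (hP : P.IsHomogeneous D) {mo : (Fin n ⊕ Fin n) →₀ ℕ} (hmo : mo ∈ P.support) :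
    (∑ i : Fin n, mo (Sum.inl i)) + (∑ i : Fin n, mo (Sum.inr i)) = D := by
  have h := hP (MvPolynomial.mem_support_iff.mp hmo)
  rw [Finsupp.weight_apply] at h
  rw [Finsupp.sum_fintype _ _ (fun _ => by simp)] at h
  rw [Fintype.sum_sum_type] at h
  simpa using h

theorem sum_pull (c' G' F' : ℝ) (a b xv : Fin n → ℝ) :
    ∑ i, xv i * (c' * (a i * G' + F' * b i))
      = c' * ((∑ i, xv i * a i) * G' + F' * (∑ i, xv i * b i)) := by
  simp only [mul_add, add_mul, Finset.mul_sum, Finset.sum_mul, Finset.sum_add_distrib]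
  congr 1 <;> apply Finset.sum_congr rfl <;> intros <;> ring

end Helpers

/-- Action of the Euler field `X_0 = Σ_i x^i ∂_i` on the bilinear operator
`B^{r,s,t} : F_λ ⊗ F_μ → F_ν`:
`L_{X_0}^ν(B(f,g)) − B(L_{X_0}^λ f, g) − B(f, L_{X_0}^μ g) = (n(ν−λ−μ) − 2(r+s+t))·B(f,g)`. -/
theorem euler_action_on_Bmon (p q n : ℕ) (hn : n = p + q) (hn1 : 1 ≤ n)
    (r s t : ℕ) (l m nu : ℝ)
    (f g : (Fin n → ℝ) → ℝ) (hf : ContDiff ℝ (⊤ : ℕ∞) f) (hg : ContDiff ℝ (⊤ : ℕ∞) g) (x : Fin n → ℝ) :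
    lieD Xeuler nu (Bmon p n r s t f g) x - Bmon p n r s t (lieD Xeuler l f) g x
        - Bmon p n r s t f (lieD Xeuler m g) x
      = ((n : ℝ) * (nu - l - m) - 2 * ((r : ℝ) + s + t)) * Bmon p n r s t f g x := by
  classical
  set P : MvPolynomial (Fin n ⊕ Fin n) ℝ :=
    (∑ j, C (eps p j) * X (Sum.inl j) ^ 2) ^ r *
    (∑ j, C (eps p j) * X (Sum.inl j) * X (Sum.inr j)) ^ s *
    (∑ j, C (eps p j) * X (Sum.inr j) ^ 2) ^ t with hPdef
  have hhom : P.IsHomogeneous (2 * (r + s + t)) := Bpoly_homog p n r s t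
  have hFc : ∀ mo : (Fin n ⊕ Fin n) →₀ ℕ,
      ContDiff ℝ (⊤ : ℕ∞) (pdIter (fun i => mo (Sum.inl i)) f) := fun mo => contDiff_pdIter _ hf
  have hGc : ∀ mo : (Fin n ⊕ Fin n) →₀ ℕ,
      ContDiff ℝ (⊤ : ℕ∞) (pdIter (fun i => mo (Sum.inr i)) g) := fun mo => contDiff_pdIter _ hg
  have hBeq : ∀ (u v : (Fin n → ℝ) → ℝ) (y : Fin n → ℝ), Bmon p n r s t u v y
      = ∑ mo ∈ P.support, P.coeff mo *
          pdIter (fun i => mo (Sum.inl i)) u y * pdIter (fun i => mo (Sum.inr i)) v y :=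
    fun u v y => rfl
  -- the second term
  have hT2 : Bmon p n r s t (lieD Xeuler l f) g x
      = ∑ mo ∈ P.support, P.coeff mo *
          ((∑ i, x i * pd i (pdIter (fun i => mo (Sum.inl i)) f) x)
            + (l * n + ∑ i, ((mo (Sum.inl i) : ℝ))) * pdIter (fun i => mo (Sum.inl i)) f x)
          * pdIter (fun i => mo (Sum.inr i)) g x := by
    rw [hBeq]
    apply Finset.sum_congr rfl
    intro mo _
    rw [lieD_euler_eq_efun, pdIter_efun _ hf]
    rfl
  -- the third term
  have hT3 : Bmon p n r s t f (lieD Xeuler m g) x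
      = ∑ mo ∈ P.support, P.coeff mo * pdIter (fun i => mo (Sum.inl i)) f x *
          ((∑ i, x i * pd i (pdIter (fun i => mo (Sum.inr i)) g) x)
            + (m * n + ∑ i, ((mo (Sum.inr i) : ℝ))) * pdIter (fun i => mo (Sum.inr i)) g x) := by
    rw [hBeq]
    apply Finset.sum_congr rfl
    intro mo _
    rw [lieD_euler_eq_efun, pdIter_efun _ hg]
    rfl
  -- derivative of B
  have hpdB : ∀ (i : Fin n) (y : Fin n → ℝ), pd i (Bmon p n r s t f g) y
      = ∑ mo ∈ P.support, P.coeff mo *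
          (pd i (pdIter (fun i => mo (Sum.inl i)) f) y * pdIter (fun i => mo (Sum.inr i)) g y
            + pdIter (fun i => mo (Sum.inl i)) f y * pd i (pdIter (fun i => mo (Sum.inr i)) g) y) := by
    intro i y
    have hB : Bmon p n r s t f g = fun z => ∑ mo ∈ P.support, P.coeff mo *
        pdIter (fun i => mo (Sum.inl i)) f z * pdIter (fun i => mo (Sum.inr i)) g z := rfl
    rw [hB, pd_sum _ (f := fun mo z => P.coeff mo *
        pdIter (fun i => mo (Sum.inl i)) f z * pdIter (fun i => mo (Sum.inr i)) g z) (fun mo _ =>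
      ((((hFc mo).differentiable (by simp)).const_mul _).mul ((hGc mo).differentiable (by simp)))) i]
    apply Finset.sum_congr rfl
    intro mo _
    rw [pd_cmul_mul (P.coeff mo) (hFc mo) (hGc mo) i]
  -- the first term
  have hT1 : lieD Xeuler nu (Bmon p n r s t f g) x
      = (∑ i, x i * pd i (Bmon p n r s t f g) x) + nu * n * Bmon p n r s t f g x := by
    rw [lieD_euler_eq_efun]
    simp only [Efun]
  rw [hT1, hT2, hT3, hBeq f g x]
  simp only [hpdB]
  rw [show (∑ i, x i * ∑ mo ∈ P.support, P.coeff mo *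
      (pd i (pdIter (fun i => mo (Sum.inl i)) f) x * pdIter (fun i => mo (Sum.inr i)) g x
        + pdIter (fun i => mo (Sum.inl i)) f x * pd i (pdIter (fun i => mo (Sum.inr i)) g) x))
    = ∑ mo ∈ P.support, ∑ i, x i * (P.coeff mo *
      (pd i (pdIter (fun i => mo (Sum.inl i)) f) x * pdIter (fun i => mo (Sum.inr i)) g x
        + pdIter (fun i => mo (Sum.inl i)) f x * pd i (pdIter (fun i => mo (Sum.inr i)) g) x))
    from by rw [Finset.sum_comm]; exact Finset.sum_congr rfl fun i _ => Finset.mul_sum _ _ _]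
  rw [Finset.mul_sum, Finset.mul_sum, ← Finset.sum_add_distrib, ← Finset.sum_sub_distrib,
    ← Finset.sum_sub_distrib]
  apply Finset.sum_congr rfl
  intro mo hmo
  have hdeg : (∑ i, ((mo (Sum.inl i) : ℝ))) + (∑ i, ((mo (Sum.inr i) : ℝ)))
      = 2 * ((r : ℝ) + s + t) := by
    have h := support_degree hhom hmo
    have h2 : (((∑ i, mo (Sum.inl i)) + (∑ i, mo (Sum.inr i)) : ℕ) : ℝ)
        = ((2 * (r + s + t) : ℕ) : ℝ) := by exact_mod_cast congrArg (Nat.cast (R := ℝ)) h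
    push_cast at h2
    linarith
  rw [sum_pull]
  linear_combination (-(P.coeff mo * pdIter (fun i => mo (Sum.inl i)) f x *
    pdIter (fun i => mo (Sum.inr i)) g x)) * hdeg


end
end

section
/- For all λ, μ ∈ ℝ, the explicit second-order bilinear operator B_2(f,g) = nμ(2 + n(2μ−1))·(Δf)·g − (2 + n(2μ−1))(2 + n(2λ−1))·Σ_i ε_i (∂_i f)(∂_i g) + nλ(2 + n(2λ−1))·f·(Δg) is o(p+1,q+1)-invariant from F_λ ⊗ F_μ to F_{λ+μ+2/n}; that is, for every generator X of o(p+1,q+1) and all smooth f, g : ℝⁿ → ℝ, one has L_X^{λ+μ+2/n}(B_2(f,g)) = B_2(L_X^λ f, g) + B_2(f, L_X^μ g). -/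
noncomputable section

/-- A bilinear differential operator `B` is `o(p+1,q+1)`-invariant from `F_λ ⊗ F_μ` to
`F_ν` if `L_X^ν(B(f,g)) = B(L_X^λ f, g) + B(f, L_X^μ g)` for every conformal generator `X`
and all smooth `f, g`. -/
def BiConfInv (p n : ℕ) (l m nu : ℝ)
    (B : ((Fin n → ℝ) → ℝ) → ((Fin n → ℝ) → ℝ) → ((Fin n → ℝ) → ℝ)) : Prop :=
  ∀ X ∈ confGens p n, ∀ f g : (Fin n → ℝ) → ℝ, ContDiff ℝ (⊤ : ℕ∞) f → ContDiff ℝ (⊤ : ℕ∞) g →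
    lieD X nu (B f g) = fun x => B (lieD X l f) g x + B f (lieD X m g) x

/-- The explicit second-order bilinear operator `B_2`. -/
def B2 (p n : ℕ) (l m : ℝ) (f g : (Fin n → ℝ) → ℝ) : (Fin n → ℝ) → ℝ :=
  fun x => (n : ℝ) * m * (2 + n * (2 * m - 1)) * lap p f x * g x
    - (2 + (n : ℝ) * (2 * m - 1)) * (2 + n * (2 * l - 1)) * (∑ i, eps p i * pd i f x * pd i g x)
    + (n : ℝ) * l * (2 + n * (2 * l - 1)) * f x * lap p g x

namespace B2Aux


variable {n : ℕ} {f g u v : (Fin n → ℝ) → ℝ} {x : Fin n → ℝ} {i j k : Fin n} {p : ℕ}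

/-! ### basic partial derivative calculus -/

lemma pd_add (hf : DifferentiableAt ℝ f x) (hg : DifferentiableAt ℝ g x) :
    pd i (fun y => f y + g y) x = pd i f x + pd i g x := by
  simp only [pd, fderiv_fun_add hf hg, ContinuousLinearMap.add_apply]

lemma pd_sub (hf : DifferentiableAt ℝ f x) (hg : DifferentiableAt ℝ g x) :
    pd i (fun y => f y - g y) x = pd i f x - pd i g x := by
  simp only [pd, fderiv_fun_sub hf hg, ContinuousLinearMap.sub_apply]

lemma pd_mul (hf : DifferentiableAt ℝ f x) (hg : DifferentiableAt ℝ g x) :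
    pd i (fun y => f y * g y) x = pd i f x * g x + f x * pd i g x := by
  simp only [pd, fderiv_fun_mul hf hg, ContinuousLinearMap.add_apply,
    ContinuousLinearMap.smul_apply, smul_eq_mul]
  ring

lemma pd_const (c : ℝ) : pd i (fun _ => c) x = 0 := by
  simp [pd]

lemma pd_const_mul (hf : DifferentiableAt ℝ f x) (c : ℝ) :
    pd i (fun y => c * f y) x = c * pd i f x := by
  simp only [pd, fderiv_const_mul hf, ContinuousLinearMap.smul_apply, smul_eq_mul]

lemma pd_sum {ι : Type*} (s : Finset ι) (F : ι → (Fin n → ℝ) → ℝ)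
    (h : ∀ j ∈ s, DifferentiableAt ℝ (F j) x) :
    pd i (fun y => ∑ j ∈ s, F j y) x = ∑ j ∈ s, pd i (F j) x := by
  simp only [pd, fderiv_fun_sum h, ContinuousLinearMap.sum_apply]

lemma pd_coord : pd i (fun y => y j) x = if j = i then 1 else 0 := by
  have h : (fun y : Fin n → ℝ => y j) = (ContinuousLinearMap.proj j : (Fin n → ℝ) →L[ℝ] ℝ) := rfl
  rw [pd, h, ContinuousLinearMap.fderiv]
  simp [Pi.single_apply]

lemma contDiff_pd (hf : ContDiff ℝ (⊤ : ℕ∞) f) : ContDiff ℝ (⊤ : ℕ∞) (pd i f) :=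
  ((hf.fderiv_right (by simp)).clm_apply contDiff_const)

lemma diff_pd (hf : ContDiff ℝ (⊤ : ℕ∞) f) : Differentiable ℝ (pd i f) :=
  (contDiff_pd hf).differentiable (by simp)

lemma pd_comm (hf : ContDiff ℝ (⊤ : ℕ∞) f) : pd i (pd j f) x = pd j (pd i f) x := by
  have hd : Differentiable ℝ f := hf.differentiable (by simp)
  have h2 : ContDiff ℝ (⊤ : ℕ∞) (fderiv ℝ f) := hf.fderiv_right (by simp)
  have hdd : DifferentiableAt ℝ (fderiv ℝ f) x := h2.differentiable (by simp) x
  have key : ∀ v w : Fin n → ℝ, fderiv ℝ (fun y => fderiv ℝ f y w) x v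
      = fderiv ℝ (fderiv ℝ f) x v w := by
    intro v w
    rw [fderiv_clm_apply hdd (differentiableAt_const w)]
    simp
  have hsym := second_derivative_symmetric (f'' := fderiv ℝ (fderiv ℝ f) x)
    (fun y => (hd y).hasFDerivAt) hdd.hasFDerivAt (Pi.single i 1) (Pi.single j 1)
  show fderiv ℝ (fun y => fderiv ℝ f y (Pi.single j 1)) x (Pi.single i 1)
      = fderiv ℝ (fun y => fderiv ℝ f y (Pi.single i 1)) x (Pi.single j 1)
  rw [key, key, hsym]

lemma pd_comm' (hf : ContDiff ℝ (⊤ : ℕ∞) f) : pd i (pd j f) = pd j (pd i f) :=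
  funext fun _ => pd_comm hf

/-! ### helper functions -/

/-- Euler operator applied to `f`. -/
def eul (f : (Fin n → ℝ) → ℝ) : (Fin n → ℝ) → ℝ := fun x => ∑ k, x k * pd k f x

/-- `r² = Σ_j ε_j (x^j)²`. -/
def r2 (p : ℕ) {n : ℕ} : (Fin n → ℝ) → ℝ := fun x => ∑ j, eps p j * x j ^ 2

lemma eps_sq : eps p i * eps p i = 1 := by
  unfold eps; split <;> norm_num

lemma differentiable_eul (hf : ContDiff ℝ (⊤ : ℕ∞) f) : Differentiable ℝ (eul f) := by
  have hd1 : ∀ k : Fin n, Differentiable ℝ (pd k f) := fun k => diff_pd hf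
  unfold eul; fun_prop

lemma differentiable_lap (hf : ContDiff ℝ (⊤ : ℕ∞) f) : Differentiable ℝ (lap p f) := by
  have hd2 : ∀ i j : Fin n, Differentiable ℝ (pd i (pd j f)) :=
    fun i j => diff_pd (contDiff_pd hf)
  unfold lap; fun_prop

lemma differentiable_r2 : Differentiable ℝ (r2 p (n := n)) := by
  unfold r2; fun_prop

lemma pd_r2 : pd k (r2 p) x = 2 * eps p k * x k := by
  unfold r2
  rw [pd_sum _ _ (fun j _ => by fun_prop)]
  have h : ∀ j : Fin n, pd k (fun y => eps p j * y j ^ 2) x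
      = eps p j * ((if j = k then 1 else 0) * x j + x j * (if j = k then 1 else 0)) := by
    intro j
    rw [show (fun y : Fin n → ℝ => eps p j * y j ^ 2) = fun y => eps p j * (y j * y j) by
      funext y; ring]
    rw [pd_const_mul (by fun_prop), pd_mul (by fun_prop) (by fun_prop), pd_coord]
  simp only [h]
  rw [Fintype.sum_eq_single k (fun j hj => by simp [hj])]
  simp; ring

lemma pd_eul (hf : ContDiff ℝ (⊤ : ℕ∞) f) : pd k (eul f) x = pd k f x + eul (pd k f) x := by
  have hd1 : ∀ j : Fin n, Differentiable ℝ (pd j f) := fun j => diff_pd hf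
  unfold eul
  rw [pd_sum _ _ (fun j _ => by fun_prop)]
  have h : ∀ j : Fin n, pd k (fun y => y j * pd j f y) x
      = (if j = k then 1 else 0) * pd j f x + x j * pd k (pd j f) x := by
    intro j
    rw [pd_mul (by fun_prop) (by fun_prop), pd_coord]
  simp only [h]
  rw [Finset.sum_add_distrib]
  congr 1
  · rw [Fintype.sum_eq_single k (fun j hj => by simp [hj])]; simp
  · exact Finset.sum_congr rfl fun j _ => by rw [pd_comm hf]

lemma pd_lap (hf : ContDiff ℝ (⊤ : ℕ∞) f) : pd k (lap p f) x = lap p (pd k f) x := by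
  have hd3 : ∀ a b c : Fin n, Differentiable ℝ (pd a (pd b (pd c f))) :=
    fun a b c => diff_pd (contDiff_pd (contDiff_pd hf))
  have hd2 : ∀ a b : Fin n, Differentiable ℝ (pd a (pd b f)) :=
    fun a b => diff_pd (contDiff_pd hf)
  unfold lap
  rw [pd_sum _ _ (fun j _ => by fun_prop)]
  refine Finset.sum_congr rfl fun j _ => ?_
  rw [pd_const_mul (by fun_prop), pd_comm (contDiff_pd hf), pd_comm' hf]

/-! ### generic Lie derivative lemmas -/

variable {X : (Fin n → ℝ) → (Fin n → ℝ)} {a b l : ℝ}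

lemma lieD_apply : lieD X l f x
    = (∑ k, X x k * pd k f x) + l * (∑ k, pd k (fun y => X y k) x) * f x := rfl

lemma lieD_mul (hu : DifferentiableAt ℝ u x) (hv : DifferentiableAt ℝ v x) :
    lieD X (a + b) (fun y => u y * v y) x = lieD X a u x * v x + u x * lieD X b v x := by
  simp only [lieD]
  rw [Finset.sum_congr rfl (fun k _ => by rw [pd_mul hu hv])]
  simp only [mul_add, Finset.sum_add_distrib, ← mul_assoc]
  rw [← Finset.sum_mul]
  have h2 : ∑ k, X x k * u x * pd k v x = u x * ∑ k, X x k * pd k v x := by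
    rw [Finset.mul_sum]; exact Finset.sum_congr rfl fun k _ => by ring
  rw [h2]; ring

lemma lieD_sum {ι : Type*} (s : Finset ι) (F : ι → (Fin n → ℝ) → ℝ)
    (h : ∀ j ∈ s, ∀ y, DifferentiableAt ℝ (F j) y) :
    lieD X l (fun y => ∑ j ∈ s, F j y) x = ∑ j ∈ s, lieD X l (F j) x := by
  simp only [lieD]
  rw [Finset.sum_congr rfl (fun k (_ : k ∈ Finset.univ) => by
    rw [pd_sum s F (fun j hj => h j hj x)])]
  rw [Finset.sum_add_distrib]
  congr 1
  · rw [Finset.sum_congr rfl (fun k (_ : k ∈ (Finset.univ : Finset (Fin n))) =>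
      Finset.mul_sum _ _ _), Finset.sum_comm]
  · rw [Finset.mul_sum]

lemma lieD_const_mul (hu : ∀ y, DifferentiableAt ℝ u y) (c : ℝ) :
    lieD X l (fun y => c * u y) x = c * lieD X l u x := by
  simp only [lieD]
  rw [Finset.sum_congr rfl (fun k _ => by rw [pd_const_mul (hu x) c])]
  rw [Finset.sum_congr rfl (fun k (_ : k ∈ (Finset.univ : Finset (Fin n))) => (by ring :
    X x k * (c * pd k u x) = c * (X x k * pd k u x))), ← Finset.mul_sum]
  ring

lemma lieD_shift (h : a = b + c) :
    lieD X a f x = lieD X b f x + c * (∑ k, pd k (fun y => X y k) x) * f x := by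
  simp only [lieD, h]; ring

lemma lieD_congr_l (h : a = b) : lieD X a f x = lieD X b f x := by rw [h]

/-! ### per-generator formulas -/

lemma pd_mul_const (hu : DifferentiableAt ℝ u x) (c : ℝ) :
    pd k (fun y => u y * c) x = pd k u x * c := by
  rw [show (fun y => u y * c) = fun y => c * u y from funext fun y => by ring,
    pd_const_mul hu, mul_comm]

lemma pd_linear (c : ℝ) (m : Fin n) : pd k (fun y => c * y m) x
    = c * (if m = k then 1 else 0) := by
  rw [pd_const_mul (by fun_prop), pd_coord]

/-- translations -/
lemma lieD_trans {i : Fin n} : lieD (Xtrans i) l f = pd i f := by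
  funext x
  simp only [lieD, Xtrans]
  rw [Finset.sum_congr rfl (fun k (_ : k ∈ (Finset.univ : Finset (Fin n))) =>
    pd_const (x := x) (i := k) ((Pi.single i 1 : Fin n → ℝ) k))]
  simp [Pi.single_apply, ite_mul]

/-- Euler -/
lemma div_euler : (∑ k, pd k (fun y : Fin n → ℝ => y k) x) = n := by
  simp only [pd_coord]
  simp

lemma lieD_euler : lieD Xeuler l f x = eul f x + l * n * f x := by
  simp only [lieD, Xeuler, eul]
  rw [div_euler]

/-- rotations -/
lemma Xrot_comp : (fun y => Xrot p i j y k)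
    = fun y => (eps p i * (Pi.single j 1 : Fin n → ℝ) k) * y i
      - (eps p j * (Pi.single i 1 : Fin n → ℝ) k) * y j := by
  funext y
  simp only [Xrot, Pi.sub_apply, Pi.smul_apply, smul_eq_mul]
  ring

lemma div_rot : (∑ k, pd k (fun y => Xrot p i j y k) x) = 0 := by
  have h : ∀ k : Fin n, pd k (fun y => Xrot p i j y k) x
      = (eps p i * (Pi.single j 1 : Fin n → ℝ) k) * (if i = k then 1 else 0)
        - (eps p j * (Pi.single i 1 : Fin n → ℝ) k) * (if j = k then 1 else 0) := by
    intro k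
    rw [Xrot_comp, pd_sub (by fun_prop) (by fun_prop), pd_linear, pd_linear]
  simp only [h, Finset.sum_sub_distrib]
  rw [Fintype.sum_eq_single i (fun k hk => by simp [(Ne.symm hk : ¬ i = k)]),
    Fintype.sum_eq_single j (fun k hk => by simp [(Ne.symm hk : ¬ j = k)])]
  by_cases hij : i = j <;> simp [hij, Pi.single_apply]

lemma lieD_rot : lieD (Xrot p i j) l f x
    = eps p i * x i * pd j f x - eps p j * x j * pd i f x := by
  simp only [lieD]
  rw [div_rot]
  have h : ∀ k : Fin n, Xrot p i j x k * pd k f x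
      = (eps p i * x i) * ((Pi.single j 1 : Fin n → ℝ) k * pd k f x)
        - (eps p j * x j) * ((Pi.single i 1 : Fin n → ℝ) k * pd k f x) := by
    intro k
    simp only [Xrot, Pi.sub_apply, Pi.smul_apply, smul_eq_mul]
    ring
  simp only [h, Finset.sum_sub_distrib, ← Finset.mul_sum]
  rw [Fintype.sum_eq_single j (fun k hk => by simp [Pi.single_apply, (Ne.symm hk : ¬ j = k)]),
    Fintype.sum_eq_single i (fun k hk => by simp [Pi.single_apply, (Ne.symm hk : ¬ i = k)])]
  simp [mul_assoc]

/-- inversions -/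
lemma Xinv_comp : (fun y => Xinv p i y k)
    = fun y => r2 p y * (Pi.single i 1 : Fin n → ℝ) k - 2 * (eps p i * y i) * y k := by
  funext y
  simp only [Xinv, r2, Pi.sub_apply, Pi.smul_apply, smul_eq_mul]

lemma div_inv : (∑ k, pd k (fun y => Xinv p i y k) x) = -2 * n * (eps p i * x i) := by
  have h : ∀ k : Fin n, pd k (fun y => Xinv p i y k) x
      = (2 * eps p k * x k) * (Pi.single i 1 : Fin n → ℝ) k
        - (2 * eps p i) * ((if i = k then 1 else 0) * x k + x i * (if k = k then 1 else 0)) := by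
    intro k
    rw [Xinv_comp, pd_sub (by have := differentiable_r2 (p := p) (n := n); fun_prop) (by fun_prop),
      pd_mul_const (differentiable_r2.differentiableAt) _, pd_r2]
    congr 1
    rw [show (fun y : Fin n → ℝ => 2 * (eps p i * y i) * y k) =
        fun y => (2 * eps p i) * (y i * y k) from funext fun y => by ring,
      pd_const_mul (by fun_prop), pd_mul (by fun_prop) (by fun_prop), pd_coord, pd_coord]
  simp only [h, Finset.sum_sub_distrib]
  rw [Fintype.sum_eq_single i (fun k hk => by simp [Pi.single_apply, (Ne.symm hk : ¬ i = k)])]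
  simp only [if_true, eq_self_iff_true, mul_ite, mul_one, mul_zero, ite_mul, zero_mul,
    mul_add, Finset.sum_add_distrib]
  rw [Fintype.sum_eq_single i (fun k hk => by simp [(Ne.symm hk : ¬ i = k)])]
  simp [Pi.single_apply, Finset.sum_const, mul_comm, mul_assoc, mul_left_comm]

lemma lieD_inv : lieD (Xinv p i) l f x
    = r2 p x * pd i f x - 2 * (eps p i * x i) * eul f x
      + l * (-2 * n * (eps p i * x i)) * f x := by
  simp only [lieD]
  rw [div_inv]
  congr 1
  have h : ∀ k : Fin n, Xinv p i x k * pd k f x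
      = r2 p x * ((Pi.single i 1 : Fin n → ℝ) k * pd k f x)
        - 2 * (eps p i * x i) * (x k * pd k f x) := by
    intro k
    simp only [Xinv, r2, Pi.sub_apply, Pi.smul_apply, smul_eq_mul]
    ring
  simp only [h, Finset.sum_sub_distrib, ← Finset.mul_sum]
  rw [Fintype.sum_eq_single i (fun k hk => by simp [Pi.single_apply, (Ne.symm hk : ¬ i = k)])]
  simp [eul, Pi.single_apply]

lemma lieD_inv_fun : lieD (Xinv p i) l f
    = fun x => r2 p x * pd i f x - 2 * (eps p i * x i) * eul f x
      + l * (-2 * n * (eps p i * x i)) * f x := funext fun _ => lieD_inv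

lemma differentiable_lieD_inv (hf : ContDiff ℝ (⊤ : ℕ∞) f) :
    Differentiable ℝ (lieD (Xinv p i) l f) := by
  rw [lieD_inv_fun]
  have h1 : Differentiable ℝ (r2 p (n := n)) := differentiable_r2
  have h2 : ∀ k : Fin n, Differentiable ℝ (pd k f) := fun k => diff_pd hf
  have h3 : Differentiable ℝ (eul f) := differentiable_eul hf
  have h4 : Differentiable ℝ f := hf.differentiable (by simp)
  fun_prop

lemma lieD_add {X : (Fin n → ℝ) → (Fin n → ℝ)} {l : ℝ}
    (hu : DifferentiableAt ℝ u x) (hv : DifferentiableAt ℝ v x) :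
    lieD X l (fun y => u y + v y) x = lieD X l u x + lieD X l v x := by
  simp only [lieD]
  rw [Finset.sum_congr rfl (fun k _ => by rw [pd_add hu hv])]
  simp only [mul_add, Finset.sum_add_distrib]
  ring

lemma lieD_sub {X : (Fin n → ℝ) → (Fin n → ℝ)} {l : ℝ}
    (hu : DifferentiableAt ℝ u x) (hv : DifferentiableAt ℝ v x) :
    lieD X l (fun y => u y - v y) x = lieD X l u x - lieD X l v x := by
  simp only [lieD]
  rw [Finset.sum_congr rfl (fun k _ => by rw [pd_sub hu hv])]
  simp only [mul_sub, Finset.sum_sub_distrib]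
  ring

lemma lieD_lap_sum {X : (Fin n → ℝ) → (Fin n → ℝ)} {l : ℝ} (hf : ContDiff ℝ (⊤ : ℕ∞) f) :
    lieD X l (lap p f) x = ∑ k, eps p k * lieD X l (pd k (pd k f)) x := by
  have hd2 : ∀ a b : Fin n, Differentiable ℝ (pd a (pd b f)) :=
    fun a b => diff_pd (contDiff_pd hf)
  rw [show lap p f = fun y => ∑ k, eps p k * pd k (pd k f) y from rfl]
  rw [lieD_sum Finset.univ _ (fun j _ y => by fun_prop)]
  exact Finset.sum_congr rfl fun k _ => lieD_const_mul (fun y => hd2 k k y) _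

/-! ### first-order commutators -/

lemma pd_lieD_euler (hf : ContDiff ℝ (⊤ : ℕ∞) f) {k : Fin n} :
    pd k (lieD Xeuler l f) x = lieD Xeuler l (pd k f) x + pd k f x := by
  have hd1 : ∀ j : Fin n, Differentiable ℝ (pd j f) := fun j => diff_pd hf
  have h3 : Differentiable ℝ (eul f) := differentiable_eul hf
  have h4 : Differentiable ℝ f := hf.differentiable (by simp)
  rw [show lieD Xeuler l f = fun y => eul f y + l * n * f y from funext fun _ => lieD_euler]
  rw [pd_add (by fun_prop) (by fun_prop), pd_eul hf,
    show (fun y => l * ↑n * f y) = fun y => (l * ↑n) * f y from rfl, pd_const_mul (by fun_prop)]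
  rw [lieD_euler (f := pd k f)]
  ring

lemma pd_lieD_rot (hf : ContDiff ℝ (⊤ : ℕ∞) f) {k : Fin n} :
    pd k (lieD (Xrot p i j) l f) x = lieD (Xrot p i j) l (pd k f) x
      + (if i = k then 1 else 0) * eps p i * pd j f x
      - (if j = k then 1 else 0) * eps p j * pd i f x := by
  have hd1 : ∀ a : Fin n, Differentiable ℝ (pd a f) := fun a => diff_pd hf
  rw [show lieD (Xrot p i j) l f
      = fun y => eps p i * y i * pd j f y - eps p j * y j * pd i f y from
    funext fun _ => lieD_rot]
  have e1 : (fun y => eps p i * y i * pd j f y)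
      = fun y => eps p i * (y i * pd j f y) := funext fun y => by ring
  have e2 : (fun y => eps p j * y j * pd i f y)
      = fun y => eps p j * (y j * pd i f y) := funext fun y => by ring
  rw [pd_sub (by fun_prop) (by fun_prop), e1, e2,
    pd_const_mul (by fun_prop), pd_const_mul (by fun_prop),
    pd_mul (by fun_prop) (by fun_prop), pd_mul (by fun_prop) (by fun_prop),
    pd_coord, pd_coord, lieD_rot (f := pd k f), pd_comm hf (i := k) (j := i),
    pd_comm hf (i := k) (j := j)]
  ring

lemma pd_lieD_inv (hf : ContDiff ℝ (⊤ : ℕ∞) f) {k : Fin n} :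
    pd k (lieD (Xinv p i) l f) x = lieD (Xinv p i) l (pd k f) x
      + 2 * (eps p k * x k) * pd i f x
      - 2 * ((if i = k then 1 else 0) * eps p i) * (eul f x + n * l * f x)
      - 2 * (eps p i * x i) * pd k f x := by
  have hd1 : ∀ a : Fin n, Differentiable ℝ (pd a f) := fun a => diff_pd hf
  have h1 : Differentiable ℝ (r2 p (n := n)) := differentiable_r2
  have h3 : Differentiable ℝ (eul f) := differentiable_eul hf
  have h4 : Differentiable ℝ f := hf.differentiable (by simp)
  rw [lieD_inv_fun]
  have e2 : (fun y => 2 * (eps p i * y i) * eul f y)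
      = fun y => (2 * eps p i) * (y i * eul f y) := funext fun y => by ring
  have e3 : (fun y => l * (-2 * ↑n * (eps p i * y i)) * f y)
      = fun y => (l * (-2 * ↑n) * eps p i) * (y i * f y) := funext fun y => by ring
  rw [pd_add (by fun_prop) (by fun_prop), pd_sub (by fun_prop) (by fun_prop),
    pd_mul (by fun_prop) (by fun_prop), pd_r2, e2, e3,
    pd_const_mul (by fun_prop), pd_const_mul (by fun_prop),
    pd_mul (by fun_prop) (by fun_prop), pd_mul (by fun_prop) (by fun_prop),
    pd_coord, pd_eul hf,
    lieD_inv (f := pd k f), pd_comm hf (i := k) (j := i)]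
  ring

lemma differentiable_lieD_euler (hf : ContDiff ℝ (⊤ : ℕ∞) f) :
    Differentiable ℝ (lieD (Xeuler (n := n)) l f) := by
  rw [show lieD Xeuler l f = fun y => eul f y + l * n * f y from funext fun _ => lieD_euler]
  have h3 : Differentiable ℝ (eul f) := differentiable_eul hf
  have h4 : Differentiable ℝ f := hf.differentiable (by simp)
  fun_prop

lemma differentiable_lieD_rot (hf : ContDiff ℝ (⊤ : ℕ∞) f) :
    Differentiable ℝ (lieD (Xrot p i j) l f) := by
  rw [show lieD (Xrot p i j) l f
      = fun y => eps p i * y i * pd j f y - eps p j * y j * pd i f y from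
    funext fun _ => lieD_rot]
  have hd1 : ∀ a : Fin n, Differentiable ℝ (pd a f) := fun a => diff_pd hf
  fun_prop

lemma lap_lieD_trans (hf : ContDiff ℝ (⊤ : ℕ∞) f) {a : ℝ} {i : Fin n} :
    lap p (lieD (Xtrans i) l f) x = lieD (Xtrans i) a (lap p f) x := by
  rw [lieD_trans, lieD_trans]
  exact (pd_lap hf).symm

lemma lap_lieD_euler (hn0 : (n : ℝ) ≠ 0) (hf : ContDiff ℝ (⊤ : ℕ∞) f) :
    lap p (lieD (Xeuler (n := n)) l f) x = lieD Xeuler (l + 2 / n) (lap p f) x := by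
  have h : ∀ k : Fin n, pd k (pd k (lieD (Xeuler (n := n)) l f)) x
      = lieD Xeuler l (pd k (pd k f)) x + 2 * pd k (pd k f) x := by
    intro k
    rw [show pd k (lieD (Xeuler (n := n)) l f)
        = fun y => lieD Xeuler l (pd k f) y + pd k f y from funext fun y => pd_lieD_euler hf]
    have d1 : Differentiable ℝ (lieD (Xeuler (n := n)) l (pd k f)) :=
      differentiable_lieD_euler (contDiff_pd hf)
    have d2 : ∀ a b : Fin n, Differentiable ℝ (pd a (pd b f)) :=
      fun a b => diff_pd (contDiff_pd hf)
    have d3 : ∀ a : Fin n, Differentiable ℝ (pd a f) := fun a => diff_pd hf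
    rw [pd_add (by fun_prop) (by fun_prop), pd_lieD_euler (contDiff_pd hf)]
    try ring
  show (∑ k, eps p k * pd k (pd k (lieD (Xeuler (n := n)) l f)) x) = _
  simp only [h, mul_add, Finset.sum_add_distrib]
  rw [← lieD_lap_sum hf]
  have h2 : (∑ k, eps p k * (2 * pd k (pd k f) x)) = 2 * lap p f x := by
    rw [show lap p f x = ∑ k, eps p k * pd k (pd k f) x from rfl, Finset.mul_sum]
    exact Finset.sum_congr rfl fun k _ => by ring
  rw [h2, lieD_shift (X := Xeuler) (b := l) (c := 2 / (n : ℝ)) rfl]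
  simp only [Xeuler]
  rw [div_euler]
  field_simp

lemma lap_lieD_rot (hf : ContDiff ℝ (⊤ : ℕ∞) f) {a : ℝ} :
    lap p (lieD (Xrot p i j) l f) x = lieD (Xrot p i j) a (lap p f) x := by
  have h : ∀ k : Fin n, eps p k * pd k (pd k (lieD (Xrot p i j) l f)) x
      = eps p k * lieD (Xrot p i j) l (pd k (pd k f)) x
        + (if i = k then 1 else 0) * (eps p k * (eps p i * (2 * pd j (pd k f) x)))
        - (if j = k then 1 else 0) * (eps p k * (eps p j * (2 * pd i (pd k f) x))) := by
    intro k
    rw [show pd k (lieD (Xrot p i j) l f)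
        = fun y => lieD (Xrot p i j) l (pd k f) y
          + (if i = k then 1 else 0) * eps p i * pd j f y
          - (if j = k then 1 else 0) * eps p j * pd i f y from funext fun y => pd_lieD_rot hf]
    have d1 : Differentiable ℝ (lieD (Xrot p i j) l (pd k f)) :=
      differentiable_lieD_rot (contDiff_pd hf)
    have d2 : ∀ a b : Fin n, Differentiable ℝ (pd a (pd b f)) :=
      fun a b => diff_pd (contDiff_pd hf)
    have d3 : ∀ a : Fin n, Differentiable ℝ (pd a f) := fun a => diff_pd hf
    rw [pd_sub (by fun_prop) (by fun_prop), pd_add (by fun_prop) (by fun_prop),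
      pd_lieD_rot (contDiff_pd hf),
      show (fun y => (if i = k then 1 else 0) * eps p i * pd j f y)
        = fun y => ((if i = k then 1 else 0) * eps p i) * pd j f y from rfl,
      show (fun y => (if j = k then 1 else 0) * eps p j * pd i f y)
        = fun y => ((if j = k then 1 else 0) * eps p j) * pd i f y from rfl,
      pd_const_mul (by fun_prop), pd_const_mul (by fun_prop),
      pd_comm hf (i := k) (j := i), pd_comm hf (i := k) (j := j)]
    ring
  show (∑ k, eps p k * pd k (pd k (lieD (Xrot p i j) l f)) x) = _
  rw [Finset.sum_congr rfl fun k _ => h k]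
  simp only [Finset.sum_add_distrib, Finset.sum_sub_distrib]
  rw [← lieD_lap_sum hf,
    Fintype.sum_eq_single i (fun k hk => by simp [(Ne.symm hk : ¬ i = k)]),
    Fintype.sum_eq_single j (fun k hk => by simp [(Ne.symm hk : ¬ j = k)]),
    (lieD_shift (X := Xrot p i j) (f := lap p f) (x := x) (a := a) (b := l) (c := a - l)
      (by ring) : lieD (Xrot p i j) a (lap p f) x = _),
    div_rot]
  simp only [if_pos rfl, one_mul]
  rw [← mul_assoc (eps p i), eps_sq, ← mul_assoc (eps p j), eps_sq,
    pd_comm' hf (i := j) (j := i)]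
  ring

lemma lap_lieD_inv (hn0 : (n : ℝ) ≠ 0) (hf : ContDiff ℝ (⊤ : ℕ∞) f) :
    lap p (lieD (Xinv p i) l f) x
      = lieD (Xinv p i) (l + 2 / n) (lap p f) x - 2 * (2 + n * (2 * l - 1)) * pd i f x := by
  have d1 : Differentiable ℝ (lieD (Xinv p i) l f) := differentiable_lieD_inv hf
  have d2 : ∀ a b : Fin n, Differentiable ℝ (pd a (pd b f)) :=
    fun a b => diff_pd (contDiff_pd hf)
  have d3 : ∀ a : Fin n, Differentiable ℝ (pd a f) := fun a => diff_pd hf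
  have d4 : Differentiable ℝ (eul f) := differentiable_eul hf
  have d5 : Differentiable ℝ f := hf.differentiable (by simp)
  have d6 : ∀ a : Fin n, Differentiable ℝ (lieD (Xinv p i) l (pd a f)) :=
    fun a => differentiable_lieD_inv (contDiff_pd hf)
  have d7 : ∀ a : Fin n, Differentiable ℝ (eul (pd a f)) :=
    fun a => differentiable_eul (contDiff_pd hf)
  have h : ∀ k : Fin n, eps p k * pd k (pd k (lieD (Xinv p i) l f)) x
      = eps p k * lieD (Xinv p i) l (pd k (pd k f)) x
        + 2 * pd i f x
        + 4 * (x k * pd k (pd i f) x)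
        + (if i = k then 1 else 0) * (eps p k * (eps p i *
            ((-4) * eul (pd k f) x + (-4 * (↑n * l) - 4) * pd k f x)))
        + (-4 * (eps p i * x i)) * (eps p k * pd k (pd k f) x) := by
    intro k
    rw [show pd k (lieD (Xinv p i) l f) = fun y =>
        lieD (Xinv p i) l (pd k f) y + (2 * eps p k) * (y k * pd i f y)
        - (2 * ((if i = k then 1 else 0) * eps p i)) * (eul f y + (↑n * l) * f y)
        - (2 * eps p i) * (y i * pd k f y)
      from funext fun y => by rw [pd_lieD_inv hf]; ring]
    simp (disch := fun_prop) only [pd_sub, pd_add, pd_mul, pd_const_mul, pd_coord, pd_const]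
    rw [pd_eul hf, pd_lieD_inv (contDiff_pd hf), pd_comm hf (i := i) (j := k)]
    simp only [eq_self_iff_true, if_true]
    by_cases hik : i = k
    · subst hik
      simp only [if_pos rfl]
      unfold eps
      split <;> ring
    · simp only [if_neg hik, if_pos rfl]
      unfold eps
      split <;> split <;> ring
  show (∑ k, eps p k * pd k (pd k (lieD (Xinv p i) l f)) x) = _
  rw [Finset.sum_congr rfl fun k _ => h k]
  simp only [Finset.sum_add_distrib]
  rw [← lieD_lap_sum hf]
  simp only [← Finset.mul_sum]
  rw [show (∑ k, x k * pd k (pd i f) x) = eul (pd i f) x from rfl,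
    show (∑ k, eps p k * pd k (pd k f) x) = lap p f x from rfl]
  simp only [Finset.sum_const, Finset.card_univ, Fintype.card_fin, nsmul_eq_mul]
  rw [Fintype.sum_eq_single i (fun k hk => by simp [(Ne.symm hk : ¬ i = k)])]
  simp only [if_pos rfl, one_mul]
  rw [← mul_assoc (eps p i), eps_sq, one_mul]
  rw [(lieD_shift (X := Xinv p i) (f := lap p f) (x := x) (a := l + 2 / (n : ℝ)) (b := l)
      (c := 2 / (n : ℝ)) rfl : lieD (Xinv p i) (l + 2 / (n : ℝ)) (lap p f) x = _), div_inv]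
  field_simp
  simp only [↓reduceIte]
  ring

/-! ### middle-sum commutators -/

lemma sum_delta (i : Fin n) (F : Fin n → ℝ) :
    (∑ k, (if i = k then 1 else 0) * F k) = F i := by
  rw [Fintype.sum_eq_single i (fun k hk => by simp [(Ne.symm hk : ¬ i = k)])]
  simp

lemma div_trans {i : Fin n} : (∑ k, pd k (fun y => Xtrans (n := n) i y k) x) = 0 := by
  simp only [Xtrans]
  rw [Finset.sum_congr rfl (fun k (_ : k ∈ (Finset.univ : Finset (Fin n))) =>
    pd_const (x := x) (i := k) ((Pi.single i 1 : Fin n → ℝ) k))]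
  simp

lemma sum_pd_lieD_trans (hf : ContDiff ℝ (⊤ : ℕ∞) f) {i : Fin n} :
    (∑ k, eps p k * pd k (lieD (Xtrans i) l f) x * pd k g x)
      = ∑ k, eps p k * (lieD (Xtrans i) l (pd k f) x * pd k g x) := by
  refine Finset.sum_congr rfl fun k _ => ?_
  rw [lieD_trans, lieD_trans, pd_comm hf (i := k) (j := i)]
  ring

lemma sum_pd_lieD_euler (hf : ContDiff ℝ (⊤ : ℕ∞) f) :
    (∑ k, eps p k * pd k (lieD (Xeuler (n := n)) l f) x * pd k g x)
      = (∑ k, eps p k * (lieD Xeuler l (pd k f) x * pd k g x))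
        + (∑ k, eps p k * pd k f x * pd k g x) := by
  rw [Finset.sum_congr rfl fun k (_ : k ∈ (Finset.univ : Finset (Fin n))) =>
    (show eps p k * pd k (lieD (Xeuler (n := n)) l f) x * pd k g x
      = eps p k * (lieD Xeuler l (pd k f) x * pd k g x) + eps p k * pd k f x * pd k g x by
      rw [pd_lieD_euler hf]; ring)]
  rw [Finset.sum_add_distrib]

lemma sum_pd_lieD_rot (hf : ContDiff ℝ (⊤ : ℕ∞) f) :
    (∑ k, eps p k * pd k (lieD (Xrot p i j) l f) x * pd k g x)
      = (∑ k, eps p k * (lieD (Xrot p i j) l (pd k f) x * pd k g x))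
        + pd j f x * pd i g x - pd i f x * pd j g x := by
  rw [Finset.sum_congr rfl fun k (_ : k ∈ (Finset.univ : Finset (Fin n))) =>
    (show eps p k * pd k (lieD (Xrot p i j) l f) x * pd k g x
      = eps p k * (lieD (Xrot p i j) l (pd k f) x * pd k g x)
        + (if i = k then 1 else 0) * (eps p k * (eps p i * (pd j f x * pd k g x)))
        - (if j = k then 1 else 0) * (eps p k * (eps p j * (pd i f x * pd k g x))) by
      rw [pd_lieD_rot hf]; ring)]
  simp only [Finset.sum_add_distrib, Finset.sum_sub_distrib]
  rw [sum_delta, sum_delta, ← mul_assoc (eps p i), eps_sq, ← mul_assoc (eps p j), eps_sq]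
  ring

lemma sum_pd_lieD_inv (hf : ContDiff ℝ (⊤ : ℕ∞) f) {i : Fin n} :
    (∑ k, eps p k * pd k (lieD (Xinv p i) l f) x * pd k g x)
      = (∑ k, eps p k * (lieD (Xinv p i) l (pd k f) x * pd k g x))
        + 2 * pd i f x * eul g x
        - 2 * (eul f x + ↑n * l * f x) * pd i g x
        - 2 * (eps p i * x i) * (∑ k, eps p k * pd k f x * pd k g x) := by
  rw [Finset.sum_congr rfl fun k (_ : k ∈ (Finset.univ : Finset (Fin n))) =>
    (show eps p k * pd k (lieD (Xinv p i) l f) x * pd k g x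
      = eps p k * (lieD (Xinv p i) l (pd k f) x * pd k g x)
        + (2 * pd i f x) * (x k * pd k g x)
        + (if i = k then 1 else 0) * (eps p k * (eps p i *
            ((-2) * (eul f x + ↑n * l * f x) * pd k g x)))
        + (-2 * (eps p i * x i)) * (eps p k * pd k f x * pd k g x) by
      rw [pd_lieD_inv hf]
      unfold eps
      by_cases hik : i = k
      · subst hik; simp only [if_pos rfl]; split <;> ring
      · simp only [if_neg hik]; split <;> split <;> ring)]
  simp only [Finset.sum_add_distrib]
  simp only [← Finset.mul_sum]
  rw [show (∑ k, x k * pd k g x) = eul g x from rfl, sum_delta,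
    ← mul_assoc (eps p i), eps_sq, one_mul]
  ring

/-! ### expansion of the Lie derivative of `B2` -/

lemma lieD_B2_expand {X : (Fin n → ℝ) → (Fin n → ℝ)} {l m : ℝ}
    (hf : ContDiff ℝ (⊤ : ℕ∞) f) (hg : ContDiff ℝ (⊤ : ℕ∞) g) :
    lieD X (l + m + 2 / (n : ℝ)) (B2 p n l m f g) x
      = ↑n * m * (2 + ↑n * (2 * m - 1)) *
          (lieD X (l + 2 / (n : ℝ)) (lap p f) x * g x + lap p f x * lieD X m g x)
        - (2 + (n : ℝ) * (2 * m - 1)) * (2 + ↑n * (2 * l - 1)) *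
            ((∑ k, eps p k * (lieD X l (pd k f) x * pd k g x))
              + (∑ k, eps p k * (pd k f x * lieD X m (pd k g) x))
              + 2 / (n : ℝ) * (∑ k, pd k (fun y => X y k) x)
                  * (∑ k, eps p k * pd k f x * pd k g x))
        + ↑n * l * (2 + ↑n * (2 * l - 1)) *
            (lieD X l f x * lap p g x + f x * lieD X (m + 2 / (n : ℝ)) (lap p g) x) := by
  have df : Differentiable ℝ f := hf.differentiable (by simp)
  have dg : Differentiable ℝ g := hg.differentiable (by simp)
  have df1 : ∀ a : Fin n, Differentiable ℝ (pd a f) := fun a => diff_pd hf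
  have dg1 : ∀ a : Fin n, Differentiable ℝ (pd a g) := fun a => diff_pd hg
  have dlf : Differentiable ℝ (lap p f) := differentiable_lap hf
  have dlg : Differentiable ℝ (lap p g) := differentiable_lap hg
  rw [show B2 p n l m f g = fun y =>
      (↑n * m * (2 + ↑n * (2 * m - 1)) * lap p f y * g y
        - (2 + (n : ℝ) * (2 * m - 1)) * (2 + ↑n * (2 * l - 1)) *
            (∑ k, eps p k * pd k f y * pd k g y))
      + ↑n * l * (2 + ↑n * (2 * l - 1)) * f y * lap p g y from rfl]
  rw [lieD_add (by fun_prop) (by fun_prop), lieD_sub (by fun_prop) (by fun_prop)]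
  have hA : lieD X (l + m + 2 / (n : ℝ))
        (fun y => ↑n * m * (2 + ↑n * (2 * m - 1)) * lap p f y * g y) x
      = ↑n * m * (2 + ↑n * (2 * m - 1)) *
          (lieD X (l + 2 / (n : ℝ)) (lap p f) x * g x + lap p f x * lieD X m g x) := by
    rw [lieD_congr_l (show l + m + 2 / (n : ℝ) = (l + 2 / (n : ℝ)) + m by ring),
      lieD_mul (u := fun y => ↑n * m * (2 + ↑n * (2 * m - 1)) * lap p f y)
        (by fun_prop) (by fun_prop),
      show (fun y => ↑n * m * (2 + ↑n * (2 * m - 1)) * lap p f y)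
        = fun y => (↑n * m * (2 + ↑n * (2 * m - 1))) * lap p f y from rfl,
      lieD_const_mul (fun y => dlf y)]
    ring
  have hC : lieD X (l + m + 2 / (n : ℝ))
        (fun y => ↑n * l * (2 + ↑n * (2 * l - 1)) * f y * lap p g y) x
      = ↑n * l * (2 + ↑n * (2 * l - 1)) *
          (lieD X l f x * lap p g x + f x * lieD X (m + 2 / (n : ℝ)) (lap p g) x) := by
    rw [lieD_congr_l (show l + m + 2 / (n : ℝ) = l + (m + 2 / (n : ℝ)) by ring),
      lieD_mul (u := fun y => ↑n * l * (2 + ↑n * (2 * l - 1)) * f y)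
        (by fun_prop) (by fun_prop),
      show (fun y => ↑n * l * (2 + ↑n * (2 * l - 1)) * f y)
        = fun y => (↑n * l * (2 + ↑n * (2 * l - 1))) * f y from rfl,
      lieD_const_mul (fun y => df y)]
    ring
  have hB : lieD X (l + m + 2 / (n : ℝ))
        (fun y => (2 + (n : ℝ) * (2 * m - 1)) * (2 + ↑n * (2 * l - 1)) *
          (∑ k, eps p k * pd k f y * pd k g y)) x
      = (2 + (n : ℝ) * (2 * m - 1)) * (2 + ↑n * (2 * l - 1)) *
          ((∑ k, eps p k * (lieD X l (pd k f) x * pd k g x))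
            + (∑ k, eps p k * (pd k f x * lieD X m (pd k g) x))
            + 2 / (n : ℝ) * (∑ k, pd k (fun y => X y k) x)
                * (∑ k, eps p k * pd k f x * pd k g x)) := by
    rw [show (fun y => (2 + (n : ℝ) * (2 * m - 1)) * (2 + ↑n * (2 * l - 1)) *
          (∑ k, eps p k * pd k f y * pd k g y))
        = fun y => ((2 + (n : ℝ) * (2 * m - 1)) * (2 + ↑n * (2 * l - 1))) *
          (∑ k, eps p k * pd k f y * pd k g y) from rfl,
      lieD_const_mul (fun y => by fun_prop)]
    congr 1
    rw [lieD_sum Finset.univ _ (fun k _ y => by fun_prop)]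
    rw [Finset.sum_congr rfl fun k (_ : k ∈ (Finset.univ : Finset (Fin n))) =>
      (show lieD X (l + m + 2 / (n : ℝ)) (fun y => eps p k * pd k f y * pd k g y) x
        = eps p k * (lieD X l (pd k f) x * pd k g x)
          + eps p k * (pd k f x * lieD X m (pd k g) x)
          + (2 / (n : ℝ) * (∑ j, pd j (fun y => X y j) x))
              * (eps p k * pd k f x * pd k g x) by
        rw [lieD_congr_l (show l + m + 2 / (n : ℝ) = l + (m + 2 / (n : ℝ)) by ring),
          lieD_mul (u := fun y => eps p k * pd k f y) (by fun_prop) (by fun_prop),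
          show (fun y => eps p k * pd k f y) = fun y => (eps p k) * pd k f y from rfl,
          lieD_const_mul (fun y => df1 k y),
          (lieD_shift (X := X) (f := pd k g) (x := x) (a := m + 2 / (n : ℝ)) (b := m)
            (c := 2 / (n : ℝ)) rfl : lieD X (m + 2 / (n : ℝ)) (pd k g) x = _)]
        ring)]
    simp only [Finset.sum_add_distrib]
    rw [← Finset.mul_sum]
    try ring
  rw [hA, hB, hC]

end B2Aux

open B2Aux

/-- The explicit second-order bilinear operator `B_2` is `o(p+1,q+1)`-invariant from
`F_λ ⊗ F_μ` to `F_{λ+μ+2/n}`. -/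
theorem B2_conformally_invariant (p q n : ℕ) (hn : n = p + q) (hn1 : 1 ≤ n) (l m : ℝ) :
    BiConfInv p n l m (l + m + 2 / n) (B2 p n l m) := by
  have hn0 : (n : ℝ) ≠ 0 := Nat.cast_ne_zero.mpr (by omega)
  intro X hX f g hf hg
  simp only [confGens, Set.mem_union, Set.mem_range, Set.mem_setOf_eq,
    Set.mem_singleton_iff] at hX
  rcases hX with (((⟨i, rfl⟩ | ⟨i, j, rfl⟩) | rfl) | ⟨i, rfl⟩)
  · -- translations
    funext x
    rw [lieD_B2_expand hf hg]
    simp only [B2]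
    have flip1 : (∑ k, eps p k * pd k f x * pd k (lieD (Xtrans i) m g) x)
        = ∑ k, eps p k * pd k (lieD (Xtrans i) m g) x * pd k f x :=
      Finset.sum_congr rfl fun k _ => by ring
    have flip2 : (∑ k, eps p k * (lieD (Xtrans i) m (pd k g) x * pd k f x))
        = ∑ k, eps p k * (pd k f x * lieD (Xtrans i) m (pd k g) x) :=
      Finset.sum_congr rfl fun k _ => by ring
    rw [lap_lieD_trans hf (a := l + 2 / (n : ℝ)), lap_lieD_trans hg (a := m + 2 / (n : ℝ)),
      sum_pd_lieD_trans hf, flip1, sum_pd_lieD_trans hg, flip2, div_trans]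
    ring
  · -- rotations
    funext x
    rw [lieD_B2_expand hf hg]
    simp only [B2]
    have flip1 : (∑ k, eps p k * pd k f x * pd k (lieD (Xrot p i j) m g) x)
        = ∑ k, eps p k * pd k (lieD (Xrot p i j) m g) x * pd k f x :=
      Finset.sum_congr rfl fun k _ => by ring
    have flip2 : (∑ k, eps p k * (lieD (Xrot p i j) m (pd k g) x * pd k f x))
        = ∑ k, eps p k * (pd k f x * lieD (Xrot p i j) m (pd k g) x) :=
      Finset.sum_congr rfl fun k _ => by ring
    have flip3 : (∑ k, eps p k * pd k g x * pd k f x)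
        = ∑ k, eps p k * pd k f x * pd k g x :=
      Finset.sum_congr rfl fun k _ => by ring
    rw [lap_lieD_rot hf (a := l + 2 / (n : ℝ)), lap_lieD_rot hg (l := m) (a := m + 2 / (n : ℝ)),
      sum_pd_lieD_rot hf, flip1, sum_pd_lieD_rot hg, flip2, div_rot]
    ring
  · -- Euler
    funext x
    rw [lieD_B2_expand hf hg]
    simp only [B2]
    have flip1 : (∑ k, eps p k * pd k f x * pd k (lieD (Xeuler (n := n)) m g) x)
        = ∑ k, eps p k * pd k (lieD (Xeuler (n := n)) m g) x * pd k f x :=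
      Finset.sum_congr rfl fun k _ => by ring
    have flip2 : (∑ k, eps p k * (lieD (Xeuler (n := n)) m (pd k g) x * pd k f x))
        = ∑ k, eps p k * (pd k f x * lieD (Xeuler (n := n)) m (pd k g) x) :=
      Finset.sum_congr rfl fun k _ => by ring
    have flip3 : (∑ k, eps p k * pd k g x * pd k f x)
        = ∑ k, eps p k * pd k f x * pd k g x :=
      Finset.sum_congr rfl fun k _ => by ring
    rw [lap_lieD_euler hn0 hf, lap_lieD_euler hn0 hg (l := m),
      sum_pd_lieD_euler hf, flip1, sum_pd_lieD_euler hg, flip2, flip3]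
    simp only [Xeuler]
    rw [div_euler]
    field_simp
    ring
  · -- inversions
    funext x
    rw [lieD_B2_expand hf hg]
    simp only [B2]
    have flip1 : (∑ k, eps p k * pd k f x * pd k (lieD (Xinv p i) m g) x)
        = ∑ k, eps p k * pd k (lieD (Xinv p i) m g) x * pd k f x :=
      Finset.sum_congr rfl fun k _ => by ring
    have flip2 : (∑ k, eps p k * (lieD (Xinv p i) m (pd k g) x * pd k f x))
        = ∑ k, eps p k * (pd k f x * lieD (Xinv p i) m (pd k g) x) :=
      Finset.sum_congr rfl fun k _ => by ring
    have flip3 : (∑ k, eps p k * pd k g x * pd k f x)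
        = ∑ k, eps p k * pd k f x * pd k g x :=
      Finset.sum_congr rfl fun k _ => by ring
    rw [lap_lieD_inv hn0 hf, lap_lieD_inv hn0 hg (l := m),
      sum_pd_lieD_inv hf, flip1, sum_pd_lieD_inv hg (l := m), flip2, flip3, div_inv]
    field_simp
    ring


end
end
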